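/- arXiv:0808.3291 — 11 statements merged into one kernel-verified Lean document; each statement's English description precedes it below -/
import Mathlib

section
/- For p > 1 and any complex sequence (a_n) in l^p, one has \sum_{n=1}^\infty |(1/n) \sum_{k=1}^n a_k|^p \le (p/(p-1))^p \sum_{n=1}^\infty |a_n|^p (Hardy's inequality). -/
open Finset Real

/-!
Elliott's proof. Let `A n` be the mean of `b 0, …, b n` and `q = p / (p - 1)`. Since
`b n = (n + 1) A n - n A (n - 1)`, Young's inequality
`A (n-1) A n ^ (p-1) ≤ A (n-1) ^ p / p + A n ^ p / q` bounds `A n ^ p - q A n ^ (p-1) b n`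
by a telescoping difference, so `∑ A ^ p ≤ q ∑ A ^ (p-1) b`.
Hölder bounds the right side by `q (∑ A ^ p) ^ (1/q) (∑ b ^ p) ^ (1/p)`; dividing out gives
`∑ A ^ p ≤ q ^ p ∑ b ^ p` for every partial sum.
-/

-- The telescoping step, with `y = A n`, `x = A (n - 1)`, `t = n`.
theorem rpow_sub_conj_mul_le {p t x y : ℝ} (hp : 1 < p) (ht : 0 ≤ t) (hx : 0 ≤ x)
    (hy : 0 ≤ y) :
    y ^ p - p / (p - 1) * (y ^ (p - 1) * ((t + 1) * y - t * x)) ≤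
      (t * x ^ p - (t + 1) * y ^ p) / (p - 1) := by
  have hp1 : 0 < p - 1 := by linarith
  have hpq : p.HolderConjugate (p / (p - 1)) := .conjExponent hp
  have young : x * y ^ (p - 1) ≤ x ^ p / p + y ^ p / (p / (p - 1)) := by
    simpa only [← rpow_mul hy, hpq.sub_one_mul_conj] using
      young_inequality_of_nonneg hx (rpow_nonneg hy (p - 1)) hpq
  have hy_pow : y ^ (p - 1) * y = y ^ p := by
    rw [← rpow_add_one' hy (by linarith), sub_add_cancel]
  have key : (t * x ^ p - (t + 1) * y ^ p) / (p - 1) -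
      (y ^ p - p / (p - 1) * (y ^ (p - 1) * ((t + 1) * y - t * x))) =
      p / (p - 1) * t * (x ^ p / p + y ^ p / (p / (p - 1)) - x * y ^ (p - 1)) := by
    rw [← hy_pow]
    field_simp
    ring
  linarith [mul_nonneg (by positivity : 0 ≤ p / (p - 1) * t) (sub_nonneg.2 young)]

theorem sum_rpow_sub_one_mul_le {ι : Type*} (s : Finset ι) {f g : ι → ℝ} {p q : ℝ}
    (hpq : p.HolderConjugate q) (hf : ∀ i ∈ s, 0 ≤ f i) (hg : ∀ i ∈ s, 0 ≤ g i) :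
    ∑ i ∈ s, f i ^ (p - 1) * g i ≤
      (∑ i ∈ s, f i ^ p) ^ (1 / q) * (∑ i ∈ s, g i ^ p) ^ (1 / p) := by
  have h := inner_le_Lp_mul_Lq_of_nonneg s hpq.symm
    (fun i hi => rpow_nonneg (hf i hi) (p - 1)) hg
  refine h.trans_eq ?_
  congr 2
  refine sum_congr rfl fun i hi => ?_
  rw [← rpow_mul (hf i hi), hpq.sub_one_mul_conj]

theorem le_rpow_mul_of_le_mul_rpow {p q T B c : ℝ} (hpq : p.HolderConjugate q) (hT : 0 ≤ T)
    (hB : 0 ≤ B) (hc : 0 ≤ c) (h : T ≤ c * (T ^ (1 / q) * B ^ (1 / p))) :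
    T ≤ c ^ p * B := by
  rcases hT.eq_or_lt with rfl | hT
  · positivity
  have hsplit : T ^ (1 / q) * T ^ (1 / p) = T := by
    rw [← rpow_add hT, one_div, one_div, hpq.symm.inv_add_inv_eq_one, rpow_one]
  have hroot : T ^ (1 / p) ≤ c * B ^ (1 / p) := by
    refine le_of_mul_le_mul_left ?_ (rpow_pos_of_pos hT (1 / q))
    rw [hsplit]
    linarith
  calc T = (T ^ (1 / p)) ^ p := by rw [← rpow_mul hT.le, one_div_mul_cancel hpq.ne_zero, rpow_one]
    _ ≤ (c * B ^ (1 / p)) ^ p := by gcongr; exact hpq.nonneg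
    _ = c ^ p * B := by
      rw [mul_rpow hc (by positivity), ← rpow_mul hB, one_div_mul_cancel hpq.ne_zero, rpow_one]

noncomputable def cesaroMean (b : ℕ → ℝ) (n : ℕ) : ℝ :=
  (∑ j ∈ range (n + 1), b j) / (n + 1)

theorem natCast_add_one_mul_cesaroMean (b : ℕ → ℝ) (n : ℕ) :
    ((n : ℝ) + 1) * cesaroMean b n = ∑ j ∈ range (n + 1), b j := by
  rw [cesaroMean, mul_div_cancel₀ _ (by positivity)]

-- At `n = 0` the truncated `n - 1` is harmless: its term carries the factor `n`.
theorem eq_cesaroMean_sub (b : ℕ → ℝ) (n : ℕ) :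
    b n = ((n : ℝ) + 1) * cesaroMean b n - n * cesaroMean b (n - 1) := by
  rw [natCast_add_one_mul_cesaroMean, sum_range_succ]
  cases n with
  | zero => simp
  | succ m => rw [Nat.add_sub_cancel, Nat.cast_succ, natCast_add_one_mul_cesaroMean]; ring

section cesaroMean

variable {b : ℕ → ℝ}

theorem cesaroMean_nonneg (hb : ∀ n, 0 ≤ b n) (n : ℕ) : 0 ≤ cesaroMean b n :=
  div_nonneg (sum_nonneg fun j _ => hb j) (by positivity)

theorem sum_cesaroMean_rpow_le {p : ℝ} (hp : 1 < p) (hb : ∀ n, 0 ≤ b n) (N : ℕ) :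
    ∑ n ∈ range N, cesaroMean b n ^ p ≤
      p / (p - 1) * ∑ n ∈ range N, cesaroMean b n ^ (p - 1) * b n := by
  set D : ℕ → ℝ := fun n => n * cesaroMean b (n - 1) ^ p
  have hterm : ∀ n ∈ range N,
      cesaroMean b n ^ p - p / (p - 1) * (cesaroMean b n ^ (p - 1) * b n) ≤
        (D n - D (n + 1)) / (p - 1) := fun n _ => by
    have h := rpow_sub_conj_mul_le hp n.cast_nonneg
      (cesaroMean_nonneg hb (n - 1)) (cesaroMean_nonneg hb n)
    rw [← eq_cesaroMean_sub] at h
    simpa only [D, Nat.add_sub_cancel, Nat.cast_succ] using h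
  have htel := sum_le_sum hterm
  rw [sum_sub_distrib, ← mul_sum, ← sum_div, sum_range_sub'] at htel
  have hDN : 0 ≤ D N := mul_nonneg N.cast_nonneg (rpow_nonneg (cesaroMean_nonneg hb _) p)
  have hD0 : D 0 = 0 := by simp [D]
  have : (D 0 - D N) / (p - 1) ≤ 0 := div_nonpos_of_nonpos_of_nonneg (by linarith) (by linarith)
  linarith

theorem sum_cesaroMean_rpow_le_rpow_mul_sum {p : ℝ} (hp : 1 < p) (hb : ∀ n, 0 ≤ b n)
    (N : ℕ) :
    ∑ n ∈ range N, cesaroMean b n ^ p ≤ (p / (p - 1)) ^ p * ∑ n ∈ range N, b n ^ p := by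
  have hpq : p.HolderConjugate (p / (p - 1)) := .conjExponent hp
  refine le_rpow_mul_of_le_mul_rpow hpq (sum_nonneg fun n _ => ?_)
    (sum_nonneg fun n _ => rpow_nonneg (hb n) p) hpq.symm.nonneg ?_
  · exact rpow_nonneg (cesaroMean_nonneg hb n) p
  refine (sum_cesaroMean_rpow_le hp hb N).trans ?_
  gcongr
  exact sum_rpow_sub_one_mul_le _ hpq (fun n _ => cesaroMean_nonneg hb n) fun n _ => hb n

end cesaroMean

theorem norm_sum_Icc_div_le_cesaroMean {𝕜 : Type*} [RCLike 𝕜] (a : ℕ → 𝕜) (n : ℕ) :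
    ‖(∑ k ∈ Icc 1 (n + 1), a k) / ((n : 𝕜) + 1)‖ ≤
      cesaroMean (fun j => ‖a (j + 1)‖) n := by
  rw [norm_div, cesaroMean, ← Nat.cast_add_one, RCLike.norm_natCast, Nat.cast_add_one]
  gcongr
  refine (norm_sum_le _ _).trans_eq ?_
  rw [← Ico_add_one_right_eq_Icc, sum_Ico_eq_sum_range]
  simp only [add_tsub_cancel_right, add_comm 1]

/-- Hardy's inequality for complex sequences in `l^p`. -/
theorem hardy_inequality (p : ℝ) (hp : 1 < p) (a : ℕ → ℂ)
    (ha : Summable fun n : ℕ => ‖a (n + 1)‖ ^ p) :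
    ∑' n : ℕ, ‖(∑ k ∈ Finset.Icc 1 (n + 1), a k) / ((n : ℂ) + 1)‖ ^ p ≤
      (p / (p - 1)) ^ p * ∑' n : ℕ, ‖a (n + 1)‖ ^ p := by
  set b : ℕ → ℝ := fun n => ‖a (n + 1)‖
  have hb : ∀ n, 0 ≤ b n := fun n => norm_nonneg _
  refine tsum_le_of_sum_range_le (fun n => by positivity) fun N => ?_
  calc ∑ n ∈ range N, ‖(∑ k ∈ Icc 1 (n + 1), a k) / ((n : ℂ) + 1)‖ ^ p
      ≤ ∑ n ∈ range N, cesaroMean b n ^ p := by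
        gcongr with n
        exact norm_sum_Icc_div_le_cesaroMean a n
    _ ≤ (p / (p - 1)) ^ p * ∑ n ∈ range N, b n ^ p :=
        sum_cesaroMean_rpow_le_rpow_mul_sum hp hb N
    _ ≤ (p / (p - 1)) ^ p * ∑' n, b n ^ p := by
        have : 0 ≤ p - 1 := by linarith
        gcongr
        exact ha.sum_le_tsum _ fun n _ => rpow_nonneg (hb n) p
end

section
/- For any sequence (a_n) of non-negative reals with convergent sum, \sum_{n=1}^\infty (\prod_{k=1}^n a_k)^{1/n} \le e \sum_{n=1}^\infty a_n (Carleman's inequality). -/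
/-!
With the weights `c k = (k + 2) ^ (k + 1) / (k + 1) ^ k` one has `∏_{k < m} c k = (m + 1) ^ m` and
`c k / (k + 1) = (1 + 1 / (k + 1)) ^ (k + 1) ≤ e`. Applying AM-GM to the numbers `c k * b k` gives
`(∏_{k ≤ n} b k) ^ (1 / (n + 1)) ≤ ∑_{k ≤ n} c k * b k / ((n + 1) * (n + 2))`; summing over `n` and
exchanging the sums, the coefficient of `c k * b k` is the telescoping sum
`∑_{n ≥ k} 1 / ((n + 1) * (n + 2)) ≤ 1 / (k + 1)`, which leaves at most `e * b k`.
-/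

open Finset Real

noncomputable def carlemanWeight (k : ℕ) : ℝ := ((k : ℝ) + 2) ^ (k + 1) / ((k : ℝ) + 1) ^ k

lemma carlemanWeight_nonneg (k : ℕ) : 0 ≤ carlemanWeight k := by
  unfold carlemanWeight; positivity

lemma prod_range_carlemanWeight (m : ℕ) : ∏ k ∈ range m, carlemanWeight k = ((m : ℝ) + 1) ^ m := by
  induction m with
  | zero => simp
  | succ m ih =>
    rw [prod_range_succ, ih, carlemanWeight]
    push_cast
    field_simp
    ring

lemma carlemanWeight_le (k : ℕ) : carlemanWeight k ≤ exp 1 * ((k : ℝ) + 1) := by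
  have hk : (0 : ℝ) < (k : ℝ) + 1 := by positivity
  have hbase : 1 + ((k + 1 : ℕ) : ℝ)⁻¹ = ((k : ℝ) + 2) / ((k : ℝ) + 1) := by
    push_cast
    field_simp
    ring
  have hpow : carlemanWeight k = (1 + ((k + 1 : ℕ) : ℝ)⁻¹) ^ (k + 1) * ((k : ℝ) + 1) := by
    rw [carlemanWeight, hbase, div_pow, pow_succ ((k : ℝ) + 1)]
    field_simp
  rw [hpow]
  exact mul_le_mul_of_nonneg_right one_add_inv_pow_le_exp hk.le

lemma sum_Ico_one_div_succ_mul_succ_succ_le (k N : ℕ) :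
    ∑ n ∈ Ico k N, 1 / (((n : ℝ) + 1) * ((n : ℝ) + 2)) ≤ 1 / ((k : ℝ) + 1) := by
  set f : ℕ → ℝ := fun i ↦ 1 / (((k + i : ℕ) : ℝ) + 1)
  have htelescope :
      ∀ i, 1 / ((((k + i : ℕ) : ℝ) + 1) * (((k + i : ℕ) : ℝ) + 2)) = f i - f (i + 1) := by
    intro i
    simp only [f]
    push_cast
    field_simp
    ring
  rw [sum_Ico_eq_sum_range]
  simp_rw [htelescope, sum_range_sub']
  have hlast : 0 ≤ f (N - k) := by positivity
  simp only [f, add_zero] at hlast ⊢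
  linarith

lemma geom_mean_mul_le_arith_mean {ι : Type*} (s : Finset ι) (hs : s.Nonempty) {b c : ι → ℝ}
    (hb : ∀ i ∈ s, 0 ≤ b i) (hc : ∀ i ∈ s, 0 ≤ c i) :
    (∏ i ∈ s, c i) ^ (#s : ℝ)⁻¹ * (∏ i ∈ s, b i) ^ (#s : ℝ)⁻¹ ≤ (∑ i ∈ s, c i * b i) / #s := by
  have := geom_mean_le_arith_mean s (fun _ ↦ 1) (fun i ↦ c i * b i) (fun _ _ ↦ zero_le_one)
    (by simpa using hs) (fun i hi ↦ mul_nonneg (hc i hi) (hb i hi))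
  simp only [rpow_one, sum_const, nsmul_eq_mul, mul_one, one_mul] at this
  rwa [prod_mul_distrib, mul_rpow (prod_nonneg hc) (prod_nonneg hb)] at this

lemma geom_mean_range_le_carlemanWeight (b : ℕ → ℝ) (hb : ∀ n, 0 ≤ b n) (n : ℕ) :
    (∏ k ∈ range (n + 1), b k) ^ (1 / ((n : ℝ) + 1)) ≤
      (∑ k ∈ range (n + 1), carlemanWeight k * b k) / (((n : ℝ) + 1) * ((n : ℝ) + 2)) := by
  have hamgm := geom_mean_mul_le_arith_mean (range (n + 1)) nonempty_range_add_one
    (fun k _ ↦ hb k) (fun k _ ↦ carlemanWeight_nonneg k)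
  have hweights : (∏ k ∈ range (n + 1), carlemanWeight k) ^ ((n : ℝ) + 1)⁻¹ = (n : ℝ) + 2 := by
    rw [prod_range_carlemanWeight, ← rpow_natCast, ← rpow_mul (by positivity)]
    push_cast
    rw [mul_inv_cancel₀ (by positivity), rpow_one]
    ring
  rw [card_range, Nat.cast_add_one, hweights] at hamgm
  rw [one_div, le_div_iff₀ (by positivity)]
  rw [le_div_iff₀ (by positivity)] at hamgm
  linarith

lemma sum_range_geom_mean_le_exp_mul_sum (b : ℕ → ℝ) (hb : ∀ n, 0 ≤ b n) (N : ℕ) :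
    ∑ n ∈ range N, (∏ k ∈ range (n + 1), b k) ^ (1 / ((n : ℝ) + 1)) ≤
      exp 1 * ∑ k ∈ range N, b k := by
  calc ∑ n ∈ range N, (∏ k ∈ range (n + 1), b k) ^ (1 / ((n : ℝ) + 1))
      ≤ ∑ n ∈ range N, ∑ k ∈ range (n + 1),
          carlemanWeight k * b k / (((n : ℝ) + 1) * ((n : ℝ) + 2)) := by
        gcongr with n
        rw [← sum_div]
        exact geom_mean_range_le_carlemanWeight b hb n
    _ = ∑ k ∈ range N, carlemanWeight k * b k *
          ∑ n ∈ Ico k N, 1 / (((n : ℝ) + 1) * ((n : ℝ) + 2)) := by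
        simp_rw [mul_sum, range_eq_Ico, ← sum_Ico_Ico_comm, mul_one_div]
    _ ≤ ∑ k ∈ range N, carlemanWeight k * b k * (1 / ((k : ℝ) + 1)) := by
        gcongr with k
        · exact mul_nonneg (carlemanWeight_nonneg k) (hb k)
        · exact sum_Ico_one_div_succ_mul_succ_succ_le k N
    _ ≤ ∑ k ∈ range N, exp 1 * b k := by
        refine sum_le_sum fun k _ ↦ ?_
        rw [mul_one_div, div_le_iff₀ (by positivity), mul_right_comm]
        exact mul_le_mul_of_nonneg_right (carlemanWeight_le k) (hb k)
    _ = exp 1 * ∑ k ∈ range N, b k := (mul_sum _ _ _).symm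

theorem tsum_geom_mean_le_exp_mul_tsum (b : ℕ → ℝ) (hb : ∀ n, 0 ≤ b n) (hs : Summable b) :
    ∑' n, (∏ k ∈ range (n + 1), b k) ^ (1 / ((n : ℝ) + 1)) ≤ exp 1 * ∑' n, b n :=
  Real.tsum_le_of_sum_range_le (fun _ ↦ rpow_nonneg (prod_nonneg fun k _ ↦ hb k) _) fun N ↦
    (sum_range_geom_mean_le_exp_mul_sum b hb N).trans <|
      mul_le_mul_of_nonneg_left (hs.sum_le_tsum _ fun _ _ ↦ hb _) (exp_pos 1).le

/-- Carleman's inequality. -/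
theorem carleman_inequality (a : ℕ → ℝ) (ha : ∀ n, 0 ≤ a n)
    (hs : Summable fun n : ℕ => a (n + 1)) :
    ∑' n : ℕ, (∏ k ∈ Finset.Icc 1 (n + 1), a k) ^ (1 / ((n : ℝ) + 1)) ≤
      Real.exp 1 * ∑' n : ℕ, a (n + 1) := by
  have hreindex (n : ℕ) : ∏ k ∈ Icc 1 (n + 1), a k = ∏ k ∈ range (n + 1), a (k + 1) := by
    rw [range_eq_Ico, prod_Ico_add' a, Ico_add_one_right_eq_Icc]
  simp_rw [hreindex]
  exact tsum_geom_mean_le_exp_mul_tsum (fun n ↦ a (n + 1)) (fun _ ↦ ha _) hs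
end

section
/- Let 1 < p < \infty and let (\lambda_n) be non-negative reals with \lambda_1 > 0, \Lambda_n = \sum_{i=1}^n \lambda_i. If there exists 0 < L < p such that for all n \ge 1, \Lambda_{n+1}/\lambda_{n+1} \le (\Lambda_n/\lambda_n)(1 - L\lambda_n/(p\Lambda_n))^{1-p} + L/p, then for every non-negative sequence (a_n), \sum_{n=1}^\infty ((\sum_{k=1}^n \lambda_k a_k)/\Lambda_n)^p \le (p/(p-L))^p \sum_{n=1}^\infty a_n^p. -/
/-!
Let `A n` be the weighted mean and `c n = Λ n / λ (n + 1)`, so that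
`(c n + 1) A (n + 1) = c n A n + a (n + 1)`. With `d = 1 - L / p`, the hypothesis says exactly
`c (n + 1) + d ≤ (c n + 1) ^ p (c n + d) ^ (1 - p)`, and convexity of `t ↦ t ^ p` gives
`(c n + d) ^ (1 - p) (c n A n + a (n + 1)) ^ p ≤ c n A n ^ p + d ^ (1 - p) a (n + 1) ^ p`.
Together they make `d ∑_{m ≤ n} A m ^ p + c n A n ^ p - d ^ (1 - p) ∑_{m ≤ n} a m ^ p`
non-increasing in `n`, and it vanishes at `n = 0`.
-/

open Finset

namespace Real

theorem one_sub_rpow_mul_rpow_add_le {p b d x z : ℝ} (hp : 1 ≤ p) (hb : 0 ≤ b) (hd : 0 < d)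
    (hx : 0 ≤ x) (hz : 0 ≤ z) :
    (b + d) ^ (1 - p) * (b * x + z) ^ p ≤ b * x ^ p + d ^ (1 - p) * z ^ p := by
  have hbd : 0 < b + d := by positivity
  have jensen := (convexOn_rpow hp).2 (Set.mem_Ici.2 hx) (Set.mem_Ici.2 (div_nonneg hz hd.le))
    (div_nonneg hb hbd.le) (div_nonneg hd.le hbd.le) (by field_simp)
  have hmean : b / (b + d) * x + d / (b + d) * (z / d) = (b * x + z) / (b + d) := by field_simp
  simp only [smul_eq_mul, hmean, div_rpow (by positivity : 0 ≤ b * x + z) hbd.le,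
    div_rpow hz hd.le] at jensen
  rw [rpow_sub hbd, rpow_sub hd, rpow_one, rpow_one]
  calc (b + d) / (b + d) ^ p * (b * x + z) ^ p
      = (b + d) * ((b * x + z) ^ p / (b + d) ^ p) := by ring
    _ ≤ (b + d) * (b / (b + d) * x ^ p + d / (b + d) * (z ^ p / d ^ p)) := by gcongr
    _ = b * x ^ p + d / d ^ p * z ^ p := by field_simp

theorem mul_one_sub_div_rpow {t c : ℝ} (p : ℝ) (ht : 0 < t) (hc : c ≤ t) :
    t * (1 - c / t) ^ (1 - p) = t ^ p * (t - c) ^ (1 - p) := by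
  rw [one_sub_div ht.ne', div_rpow (by linarith) ht.le, rpow_sub ht, rpow_one]
  have := rpow_pos_of_pos ht p
  field_simp

end Real

open Real

section Recurrence

variable {p d : ℝ} {c x z : ℕ → ℝ}

theorem add_mul_rpow_le_of_recurrence (hp : 1 ≤ p) (hd : 0 < d) (hc : ∀ n, 0 ≤ c n)
    (hx : ∀ n, 0 ≤ x n) (hz : ∀ n, 0 ≤ z n)
    (hrec : ∀ n, (c n + 1) * x (n + 1) = c n * x n + z (n + 1))
    (hcond : ∀ n, c (n + 1) + d ≤ (c n + 1) ^ p * (c n + d) ^ (1 - p)) (n : ℕ) :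
    (c (n + 1) + d) * x (n + 1) ^ p ≤ c n * x n ^ p + d ^ (1 - p) * z (n + 1) ^ p :=
  calc (c (n + 1) + d) * x (n + 1) ^ p
      ≤ (c n + 1) ^ p * (c n + d) ^ (1 - p) * x (n + 1) ^ p := by
        gcongr
        · exact rpow_nonneg (hx _) p
        · exact hcond n
    _ = (c n + d) ^ (1 - p) * (c n * x n + z (n + 1)) ^ p := by
        rw [← hrec, mul_rpow (by linarith [hc n]) (hx _)]
        ring
    _ ≤ c n * x n ^ p + d ^ (1 - p) * z (n + 1) ^ p :=
        one_sub_rpow_mul_rpow_add_le hp (hc n) hd (hx n) (hz _)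

theorem mul_sum_rpow_add_le_of_recurrence (hp : 1 ≤ p) (hd : 0 < d) (hc : ∀ n, 0 ≤ c n)
    (hc0 : c 0 = 0) (hx : ∀ n, 0 ≤ x n) (hz : ∀ n, 0 ≤ z n)
    (hrec : ∀ n, (c n + 1) * x (n + 1) = c n * x n + z (n + 1))
    (hcond : ∀ n, c (n + 1) + d ≤ (c n + 1) ^ p * (c n + d) ^ (1 - p)) (N : ℕ) :
    d * ∑ n ∈ range N, x (n + 1) ^ p + c N * x N ^ p ≤
      d ^ (1 - p) * ∑ n ∈ range N, z (n + 1) ^ p := by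
  induction N with
  | zero => simp [hc0]
  | succ N ih =>
    have step := add_mul_rpow_le_of_recurrence hp hd hc hx hz hrec hcond N
    rw [sum_range_succ, sum_range_succ]
    linarith

theorem tsum_rpow_le_of_recurrence (hp : 1 ≤ p) (hd : 0 < d) (hc : ∀ n, 0 ≤ c n)
    (hc0 : c 0 = 0) (hx : ∀ n, 0 ≤ x n) (hz : ∀ n, 0 ≤ z n)
    (hrec : ∀ n, (c n + 1) * x (n + 1) = c n * x n + z (n + 1))
    (hcond : ∀ n, c (n + 1) + d ≤ (c n + 1) ^ p * (c n + d) ^ (1 - p))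
    (hsum : Summable fun n => z (n + 1) ^ p) :
    ∑' n, x (n + 1) ^ p ≤ d⁻¹ ^ p * ∑' n, z (n + 1) ^ p := by
  have hdp : d ^ (1 - p) = d * d⁻¹ ^ p := by
    rw [rpow_sub hd, rpow_one, inv_rpow hd.le, div_eq_mul_inv]
  refine tsum_le_of_sum_range_le (fun n => rpow_nonneg (hx _) p) fun N => ?_
  have hN := mul_sum_rpow_add_le_of_recurrence hp hd hc hc0 hx hz hrec hcond N
  have htail : 0 ≤ c N * x N ^ p := mul_nonneg (hc N) (rpow_nonneg (hx N) p)
  have hpartial : ∑ n ∈ range N, z (n + 1) ^ p ≤ ∑' n, z (n + 1) ^ p :=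
    hsum.sum_le_tsum _ fun n _ => rpow_nonneg (hz _) p
  rw [hdp, mul_assoc] at hN
  calc ∑ n ∈ range N, x (n + 1) ^ p ≤ d⁻¹ ^ p * ∑ n ∈ range N, z (n + 1) ^ p :=
        le_of_mul_le_mul_left (by linarith) hd
    _ ≤ d⁻¹ ^ p * ∑' n, z (n + 1) ^ p := by gcongr

end Recurrence

section WeightedMean

variable {lam Lam : ℕ → ℝ}

theorem partialSum_succ (hLam : ∀ n, Lam n = ∑ i ∈ Icc 1 n, lam i) (n : ℕ) :
    Lam (n + 1) = Lam n + lam (n + 1) := by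
  rw [hLam, hLam, sum_Icc_succ_top (Nat.le_add_left 1 n)]

theorem partialSum_nonneg (hlam : ∀ n, 0 ≤ lam n)
    (hLam : ∀ n, Lam n = ∑ i ∈ Icc 1 n, lam i) (n : ℕ) : 0 ≤ Lam n :=
  hLam n ▸ sum_nonneg fun i _ => hlam i

theorem partialSum_pos (hlam : ∀ n, 0 < lam n) (hLam : ∀ n, Lam n = ∑ i ∈ Icc 1 n, lam i)
    {n : ℕ} (hn : 0 < n) : 0 < Lam n :=
  hLam n ▸ sum_pos (fun i _ => hlam i) ⟨n, mem_Icc.2 ⟨hn, le_rfl⟩⟩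

theorem weightedMean_succ (hlam : ∀ n, 0 < lam n) (hLam : ∀ n, Lam n = ∑ i ∈ Icc 1 n, lam i)
    (a : ℕ → ℝ) (n : ℕ) :
    (Lam n / lam (n + 1) + 1) * ((∑ k ∈ Icc 1 (n + 1), lam k * a k) / Lam (n + 1)) =
      Lam n / lam (n + 1) * ((∑ k ∈ Icc 1 n, lam k * a k) / Lam n) + a (n + 1) := by
  have hpos := partialSum_pos hlam hLam n.succ_pos
  have hmean :
      Lam n * ((∑ k ∈ Icc 1 n, lam k * a k) / Lam n) = ∑ k ∈ Icc 1 n, lam k * a k := by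
    rcases n.eq_zero_or_pos with rfl | hn
    · simp
    · exact mul_div_cancel₀ _ (partialSum_pos hlam hLam hn).ne'
  rw [sum_Icc_succ_top (Nat.le_add_left 1 n), ← hmean]
  rw [partialSum_succ hLam] at hpos ⊢
  have := hlam (n + 1)
  field_simp

theorem ratio_add_le_of_condition {p L : ℝ} (hp : 0 < p) (hLp : L ≤ p) (hlam : ∀ n, 0 < lam n)
    (hLam : ∀ n, Lam n = ∑ i ∈ Icc 1 n, lam i) (n : ℕ)
    (h : Lam (n + 2) / lam (n + 2) ≤
      Lam (n + 1) / lam (n + 1) * (1 - L * lam (n + 1) / (p * Lam (n + 1))) ^ (1 - p) + L / p) :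
    Lam (n + 1) / lam (n + 2) + (1 - L / p) ≤
      (Lam n / lam (n + 1) + 1) ^ p * (Lam n / lam (n + 1) + (1 - L / p)) ^ (1 - p) := by
  have hl1 := hlam (n + 1)
  have hl2 := hlam (n + 2)
  have hc : 0 ≤ Lam n / lam (n + 1) :=
    div_nonneg (partialSum_nonneg (fun i => (hlam i).le) hLam n) hl1.le
  have hLp' : L / p ≤ 1 := (div_le_one hp).2 hLp
  have ht : Lam (n + 1) / lam (n + 1) = Lam n / lam (n + 1) + 1 := by
    rw [partialSum_succ hLam, add_div, div_self hl1.ne']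
  have ht' : Lam (n + 2) / lam (n + 2) = Lam (n + 1) / lam (n + 2) + 1 := by
    rw [partialSum_succ hLam (n + 1), add_div, div_self hl2.ne']
  have hbase : L * lam (n + 1) / (p * Lam (n + 1)) = L / p / (Lam (n + 1) / lam (n + 1)) := by
    field_simp
  rw [hbase, mul_one_sub_div_rpow p (by linarith) (by linarith), ht, ht'] at h
  rw [show Lam n / lam (n + 1) + (1 - L / p) = Lam n / lam (n + 1) + 1 - L / p by ring]
  linarith

end WeightedMean

theorem lp_norm_weighted_mean_general (p L : ℝ) (hp : 1 < p) (hLp : L < p)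
    (lam Lam : ℕ → ℝ) (hlam : ∀ n, 0 < lam n)
    (hLam : ∀ n, Lam n = ∑ i ∈ Finset.Icc 1 n, lam i)
    (hcond : ∀ n : ℕ, 1 ≤ n →
      Lam (n + 1) / lam (n + 1) ≤
        (Lam n / lam n) * (1 - L * lam n / (p * Lam n)) ^ (1 - p) + L / p)
    (a : ℕ → ℝ) (ha : ∀ n, 0 ≤ a n)
    (hsum : Summable fun n : ℕ => a (n + 1) ^ p) :
    ∑' n : ℕ, ((∑ k ∈ Finset.Icc 1 (n + 1), lam k * a k) / Lam (n + 1)) ^ p ≤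
      (p / (p - L)) ^ p * ∑' n : ℕ, a (n + 1) ^ p := by
  have hp0 : 0 < p := by linarith
  have hd : 0 < 1 - L / p := by rw [sub_pos, div_lt_one hp0]; exact hLp
  have hLam_nonneg := partialSum_nonneg (fun i => (hlam i).le) hLam
  rw [show p / (p - L) = (1 - L / p)⁻¹ by field_simp]
  refine tsum_rpow_le_of_recurrence hp.le hd (c := fun n => Lam n / lam (n + 1))
    (fun n => div_nonneg (hLam_nonneg n) (hlam _).le) (by simp [hLam])
    (fun n => div_nonneg (sum_nonneg fun k _ => mul_nonneg (hlam k).le (ha k)) (hLam_nonneg n))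
    ha (weightedMean_succ hlam hLam a)
    (fun n => ratio_add_le_of_condition hp0 hLp.le hlam hLam n (hcond (n + 1) n.succ_pos)) hsum

/-- Theorem 1.1 (Gao): a sufficient condition for the `l^p` norm bound `p/(p-L)`
for weighted mean matrices. -/
theorem lp_norm_weighted_mean (p L : ℝ) (hp : 1 < p) (hL0 : 0 < L) (hLp : L < p)
    (lam Lam : ℕ → ℝ) (hlam : ∀ n, 0 < lam n)
    (hLam : ∀ n, Lam n = ∑ i ∈ Finset.Icc 1 n, lam i)
    (hcond : ∀ n : ℕ, 1 ≤ n →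
      Lam (n + 1) / lam (n + 1) ≤
        (Lam n / lam n) * (1 - L * lam n / (p * Lam n)) ^ (1 - p) + L / p)
    (a : ℕ → ℝ) (ha : ∀ n, 0 ≤ a n)
    (hsum : Summable fun n : ℕ => a (n + 1) ^ p) :
    ∑' n : ℕ, ((∑ k ∈ Finset.Icc 1 (n + 1), lam k * a k) / Lam (n + 1)) ^ p ≤
      (p / (p - L)) ^ p * ∑' n : ℕ, a (n + 1) ^ p :=
  lp_norm_weighted_mean_general p L hp hLp lam Lam hlam hLam hcond a ha hsum
end

section
/- Let 1 < p < \infty, (\lambda_n) positive reals, \Lambda_n = \sum_{i=1}^n \lambda_i. If L = \sup_n (\Lambda_{n+1}/\lambda_{n+1} - \Lambda_n/\lambda_n) < p, then for every non-negative sequence (a_n), \sum_{n=1}^\infty ((\sum_{k=1}^n \lambda_k a_k)/\Lambda_n)^p \le (p/(p-L))^p \sum_{n=1}^\infty a_n^p (Cartlidge's theorem). -/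
/-!
With `A n` the weighted mean `(∑_{k ≤ n} λ_k a_k) / Λ_n` we have
`λ_{n+1} a_{n+1} = Λ_{n+1} A_{n+1} - Λ_n A_n`. Expanding `p a_{n+1} A_{n+1}^{p-1}` with this
identity and bounding the cross term by Young's inequality gives
`(p - L) A_{n+1}^p + (T_{n+1} - T_n) ≤ p a_{n+1} A_{n+1}^{p-1}` with `T_n = Λ_n / λ_{n+1} · A_n^p`,
where the bound on `L` absorbs the mismatch of weights. Summing telescopes `T ≥ 0`, and a
second, rescaled Young inequality turns `(p - L) ∑ A^p ≤ p ∑ a A^{p-1}` into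
`∑ A^p ≤ (p / (p - L))^p ∑ a^p`.
-/

open Finset Real

theorem mul_mul_rpow_sub_one_le {p x y : ℝ} (hp : 1 < p) (hx : 0 ≤ x) (hy : 0 ≤ y) :
    p * (x * y ^ (p - 1)) ≤ x ^ p + (p - 1) * y ^ p := by
  have hpq := HolderConjugate.conjExponent hp
  have h := young_inequality_of_nonneg hx (rpow_nonneg hy (p - 1)) hpq
  rw [← rpow_mul hy, hpq.sub_one_mul_conj, conjExponent] at h
  have hp0 : 0 < p := by linarith
  have hp1 : 0 < p - 1 := by linarith
  calc p * (x * y ^ (p - 1)) ≤ p * (x ^ p / p + y ^ p / (p / (p - 1))) := by gcongr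
    _ = x ^ p + (p - 1) * y ^ p := by field_simp

theorem mul_mul_rpow_sub_one_le_scaled {p c x y : ℝ} (hp : 1 < p) (hc : 0 < c) (hx : 0 ≤ x)
    (hy : 0 ≤ y) : p * (x * y ^ (p - 1)) ≤ c ^ (p - 1) * x ^ p + (p - 1) / c * y ^ p := by
  have h := mul_mul_rpow_sub_one_le hp hx (div_nonneg hy hc.le)
  rw [div_rpow hy hc.le, div_rpow hy hc.le] at h
  have hcp : c ^ p = c ^ (p - 1) * c := by
    rw [← rpow_add_one hc.ne', sub_add_cancel]
  have hcp1 : 0 < c ^ (p - 1) := rpow_pos_of_pos hc _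
  rw [hcp] at h
  calc p * (x * y ^ (p - 1)) = c ^ (p - 1) * (p * (x * (y ^ (p - 1) / c ^ (p - 1)))) := by
        field_simp
    _ ≤ c ^ (p - 1) * (x ^ p + (p - 1) * (y ^ p / (c ^ (p - 1) * c))) := by gcongr
    _ = c ^ (p - 1) * x ^ p + (p - 1) / c * y ^ p := by field_simp

theorem sum_rpow_le_of_mul_sum_rpow_le {ι : Type*} (s : Finset ι) {f g : ι → ℝ} {p K : ℝ}
    (hp : 1 < p) (hK : 0 < K) (hf : ∀ i ∈ s, 0 ≤ f i) (hg : ∀ i ∈ s, 0 ≤ g i)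
    (h : K * ∑ i ∈ s, g i ^ p ≤ p * ∑ i ∈ s, f i * g i ^ (p - 1)) :
    ∑ i ∈ s, g i ^ p ≤ (p / K) ^ p * ∑ i ∈ s, f i ^ p := by
  set c := p / K
  have hc : 0 < c := div_pos (by linarith) hK
  have hyoung : p * ∑ i ∈ s, f i * g i ^ (p - 1)
      ≤ c ^ (p - 1) * ∑ i ∈ s, f i ^ p + (p - 1) / c * ∑ i ∈ s, g i ^ p := by
    rw [mul_sum, mul_sum, mul_sum, ← sum_add_distrib]
    exact sum_le_sum fun i hi => mul_mul_rpow_sub_one_le_scaled hp hc (hf i hi) (hg i hi)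
  have hK_eq : K = p / c := (div_div_cancel₀ (by linarith)).symm
  have hcp : c ^ p = c * c ^ (p - 1) := by
    rw [mul_comm, ← rpow_add_one hc.ne', sub_add_cancel]
  rw [hK_eq] at h
  rw [hcp, mul_assoc, ← div_le_iff₀' hc]
  calc (∑ i ∈ s, g i ^ p) / c
      = p / c * ∑ i ∈ s, g i ^ p - (p - 1) / c * ∑ i ∈ s, g i ^ p := by ring
    _ ≤ c ^ (p - 1) * ∑ i ∈ s, f i ^ p := by linarith

theorem sub_add_mul_rpow_sub_le {p L s lam Lam x y a : ℝ} (hp : 1 < p) (hlam : 0 < lam)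
    (hLam : 0 ≤ Lam) (hx : 0 ≤ x) (hy : 0 ≤ y) (hs : s ≤ L + Lam / lam)
    (hmean : (Lam + lam) * y = Lam * x + lam * a) :
    (p - L + s) * y ^ p - Lam / lam * x ^ p ≤ p * (a * y ^ (p - 1)) := by
  have ha : a = y + Lam / lam * (y - x) := by
    field_simp
    linarith
  set w := Lam / lam
  have hw : 0 ≤ w := div_nonneg hLam hlam.le
  have hyy : y * y ^ (p - 1) = y ^ p := by
    rw [mul_comm, ← rpow_add_one' hy (by linarith), sub_add_cancel]
  have hyoung := mul_le_mul_of_nonneg_left (mul_mul_rpow_sub_one_le hp hx hy) hw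
  have hyp : 0 ≤ y ^ p := rpow_nonneg hy p
  calc (p - L + s) * y ^ p - w * x ^ p
      ≤ (p + w) * y ^ p - w * x ^ p := by gcongr ?_ * _ - _; linarith
    _ ≤ p * (1 + w) * (y * y ^ (p - 1)) - w * (p * (x * y ^ (p - 1))) := by rw [hyy]; linarith
    _ = p * (a * y ^ (p - 1)) := by rw [ha]; ring

theorem sub_mul_sum_rpow_le {p L : ℝ} {lam Lam A a : ℕ → ℝ} (hp : 1 < p)
    (hlam : ∀ n, 0 < lam n) (hLam_zero : Lam 0 = 0) (hLam_nonneg : ∀ n, 0 ≤ Lam n)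
    (hLam_succ : ∀ n, Lam (n + 1) = Lam n + lam (n + 1))
    (hL : ∀ n, Lam (n + 2) / lam (n + 2) - Lam (n + 1) / lam (n + 1) ≤ L)
    (hA : ∀ n, 0 ≤ A n)
    (hmean : ∀ n, Lam (n + 1) * A (n + 1) = Lam n * A n + lam (n + 1) * a (n + 1)) (N : ℕ) :
    (p - L) * ∑ n ∈ range N, A (n + 1) ^ p
      ≤ p * ∑ n ∈ range N, a (n + 1) * A (n + 1) ^ (p - 1) := by
  set T : ℕ → ℝ := fun n => Lam n / lam (n + 1) * A n ^ p
  have hstep (n : ℕ) : (p - L) * A (n + 1) ^ p + (T (n + 1) - T n)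
      ≤ p * (a (n + 1) * A (n + 1) ^ (p - 1)) := by
    have hs : Lam (n + 1) / lam (n + 2) ≤ L + Lam n / lam (n + 1) := by
      have h₁ : Lam (n + 2) / lam (n + 2) = Lam (n + 1) / lam (n + 2) + 1 := by
        rw [hLam_succ (n + 1), add_div, div_self (hlam _).ne']
      have h₂ : Lam (n + 1) / lam (n + 1) = Lam n / lam (n + 1) + 1 := by
        rw [hLam_succ n, add_div, div_self (hlam _).ne']
      linarith [hL n]
    have h := sub_add_mul_rpow_sub_le hp (hlam (n + 1)) (hLam_nonneg n) (hA n) (hA (n + 1)) hs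
      (hLam_succ n ▸ hmean n)
    simp only [T]
    linarith
  have hsum := sum_le_sum fun n (_ : n ∈ range N) => hstep n
  rw [sum_add_distrib, sum_range_sub, ← mul_sum, ← mul_sum] at hsum
  have hT0 : T 0 = 0 := by simp [T, hLam_zero]
  have hTN : 0 ≤ T N := mul_nonneg (div_nonneg (hLam_nonneg N) (hlam _).le) (rpow_nonneg (hA N) p)
  linarith

/-- Cartlidge's theorem. -/
theorem cartlidge (p L : ℝ) (hp : 1 < p)
    (lam Lam : ℕ → ℝ) (hlam : ∀ n, 0 < lam n)
    (hLam : ∀ n, Lam n = ∑ i ∈ Finset.Icc 1 n, lam i)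
    (hbdd : BddAbove (Set.range fun n : ℕ =>
      Lam (n + 2) / lam (n + 2) - Lam (n + 1) / lam (n + 1)))
    (hLdef : L = ⨆ n : ℕ, (Lam (n + 2) / lam (n + 2) - Lam (n + 1) / lam (n + 1)))
    (hLp : L < p)
    (a : ℕ → ℝ) (ha : ∀ n, 0 ≤ a n)
    (hsum : Summable fun n : ℕ => a (n + 1) ^ p) :
    ∑' n : ℕ, ((∑ k ∈ Finset.Icc 1 (n + 1), lam k * a k) / Lam (n + 1)) ^ p ≤
      (p / (p - L)) ^ p * ∑' n : ℕ, a (n + 1) ^ p := by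
  have hLam_zero : Lam 0 = 0 := by simp [hLam]
  have hLam_nonneg (n : ℕ) : 0 ≤ Lam n := hLam n ▸ sum_nonneg fun i _ => (hlam i).le
  have hLam_succ (n : ℕ) : Lam (n + 1) = Lam n + lam (n + 1) := by
    rw [hLam, hLam, sum_Icc_succ_top (by omega)]
  set A : ℕ → ℝ := fun n => (∑ k ∈ Icc 1 n, lam k * a k) / Lam n
  have hA (n : ℕ) : 0 ≤ A n :=
    div_nonneg (sum_nonneg fun i _ => mul_nonneg (hlam i).le (ha i)) (hLam_nonneg n)
  have hLam_mul_A (n : ℕ) : Lam n * A n = ∑ k ∈ Icc 1 n, lam k * a k := by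
    rcases n with _ | n
    · simp [A, hLam_zero]
    · exact mul_div_cancel₀ _ (by linarith [hLam_succ n, hLam_nonneg n, hlam (n + 1)])
  have hmean (n : ℕ) : Lam (n + 1) * A (n + 1) = Lam n * A n + lam (n + 1) * a (n + 1) := by
    rw [hLam_mul_A, hLam_mul_A, sum_Icc_succ_top (by omega)]
  have hL (n : ℕ) : Lam (n + 2) / lam (n + 2) - Lam (n + 1) / lam (n + 1) ≤ L :=
    hLdef ▸ le_ciSup hbdd n
  refine tsum_le_of_sum_range_le (fun n => rpow_nonneg (hA (n + 1)) p) fun N => ?_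
  calc ∑ n ∈ range N, A (n + 1) ^ p ≤ (p / (p - L)) ^ p * ∑ n ∈ range N, a (n + 1) ^ p :=
        sum_rpow_le_of_mul_sum_rpow_le _ hp (sub_pos.2 hLp) (fun n _ => ha (n + 1))
          (fun n _ => hA (n + 1))
          (sub_mul_sum_rpow_le hp hlam hLam_zero hLam_nonneg hLam_succ hL hA hmean N)
    _ ≤ (p / (p - L)) ^ p * ∑' n, a (n + 1) ^ p := by
      gcongr
      exact hsum.sum_le_tsum _ fun n _ => rpow_nonneg (ha (n + 1)) p
end

section
/- Let (\lambda_n) be positive reals with \Lambda_n = \sum_{i=1}^n \lambda_i, and suppose M = \sup_n (\Lambda_n/\lambda_n) \log((\Lambda_{n+1}/\lambda_{n+1})/(\Lambda_n/\lambda_n)) < \infty. Then for any non-negative (a_n) with convergent sum, \sum_{n=1}^\infty \prod_{k=1}^n a_k^{\lambda_k/\Lambda_n} \le e^M \sum_{n=1}^\infty a_n. -/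
/-!
Write `c_k = Λ_k / λ_k` and `μ_k = c_k exp (c_k log (c_{k+1} / c_k))`. Since
`λ_k log μ_k = Λ_k log c_{k+1} - Λ_{k-1} log c_k` telescopes, the `λ`-weighted geometric mean of
`μ_1, …, μ_m` is `c_{m+1}`, so weighted AM-GM applied to `μ_k a_k` gives
`∏_{k ≤ m} a_k ^ (λ_k / Λ_m) ≤ (1 / Λ_m - 1 / Λ_{m+1}) ∑_{k ≤ m} λ_k μ_k a_k`.
Summing over `m` by parts, the coefficient of `a_k` is at most
`λ_k μ_k / Λ_k = exp (c_k log (c_{k+1} / c_k)) ≤ e^M`.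
-/

open Finset Real

theorem sum_range_add_one_eq_sum_Icc {M : Type*} [AddCommMonoid M] (f : ℕ → M) (N : ℕ) :
    ∑ i ∈ range N, f (i + 1) = ∑ k ∈ Icc 1 N, f k := by
  rw [range_eq_Ico, sum_Ico_add', Ico_add_one_right_eq_Icc]

theorem sum_Icc_sub_mul_sum_Icc {R : Type*} [CommRing R] (u x : ℕ → R) (N : ℕ) :
    ∑ m ∈ Icc 1 N, (u m - u (m + 1)) * ∑ k ∈ Icc 1 m, x k =
      ∑ k ∈ Icc 1 N, u k * x k - u (N + 1) * ∑ k ∈ Icc 1 N, x k := by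
  induction N with
  | zero => simp
  | succ N ih =>
    simp only [sum_Icc_succ_top (Nat.le_add_left 1 N), ih]
    ring

theorem sum_Icc_sub_mul_sum_Icc_le {R : Type*} [CommRing R] [LinearOrder R]
    [IsStrictOrderedRing R] {u x : ℕ → R} (N : ℕ) (hu : 0 ≤ u (N + 1))
    (hx : ∀ k ∈ Icc 1 N, 0 ≤ x k) :
    ∑ m ∈ Icc 1 N, (u m - u (m + 1)) * ∑ k ∈ Icc 1 m, x k ≤ ∑ k ∈ Icc 1 N, u k * x k := by
  rw [sum_Icc_sub_mul_sum_Icc, sub_le_self_iff]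
  exact mul_nonneg hu (sum_nonneg hx)

theorem prod_rpow_mul_prod_rpow_le_sum {ι : Type*} (s : Finset ι) {w b a : ι → ℝ}
    (hw : ∀ i ∈ s, 0 ≤ w i) (hw₁ : ∑ i ∈ s, w i = 1) (hb : ∀ i ∈ s, 0 ≤ b i)
    (ha : ∀ i ∈ s, 0 ≤ a i) :
    (∏ i ∈ s, b i ^ w i) * ∏ i ∈ s, a i ^ w i ≤ ∑ i ∈ s, w i * (b i * a i) := by
  rw [← prod_mul_distrib]
  refine le_of_eq_of_le (prod_congr rfl fun i hi => ?_)
    (geom_mean_le_arith_mean_weighted s w _ hw hw₁ fun i hi => mul_nonneg (hb i hi) (ha i hi))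
  exact (mul_rpow (hb i hi) (ha i hi)).symm

namespace WeightedCarleman

noncomputable def ratio (lam Lam : ℕ → ℝ) (k : ℕ) : ℝ := Lam k / lam k

noncomputable def growth (lam Lam : ℕ → ℝ) (k : ℕ) : ℝ :=
  ratio lam Lam k * log (ratio lam Lam (k + 1) / ratio lam Lam k)

noncomputable def weight (lam Lam : ℕ → ℝ) (k : ℕ) : ℝ := ratio lam Lam k * exp (growth lam Lam k)

variable {lam Lam : ℕ → ℝ}

theorem Lam_succ (hLam : ∀ n, Lam n = ∑ i ∈ Icc 1 n, lam i) (m : ℕ) :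
    Lam (m + 1) = Lam m + lam (m + 1) := by
  rw [hLam, hLam, sum_Icc_succ_top (Nat.le_add_left 1 m)]

theorem Lam_pos (hlam : ∀ n, 0 < lam n) (hLam : ∀ n, Lam n = ∑ i ∈ Icc 1 n, lam i) {m : ℕ}
    (hm : 1 ≤ m) : 0 < Lam m := by
  rw [hLam]
  exact sum_pos (fun i _ => hlam i) ⟨m, mem_Icc.mpr ⟨hm, le_rfl⟩⟩

theorem ratio_pos (hlam : ∀ n, 0 < lam n) (hLam : ∀ n, Lam n = ∑ i ∈ Icc 1 n, lam i) {k : ℕ}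
    (hk : 1 ≤ k) : 0 < ratio lam Lam k :=
  div_pos (Lam_pos hlam hLam hk) (hlam k)

theorem ratio_mul (hlam : ∀ n, 0 < lam n) (k : ℕ) : ratio lam Lam k * lam k = Lam k :=
  div_mul_cancel₀ _ (hlam k).ne'

theorem weight_pos (hlam : ∀ n, 0 < lam n) (hLam : ∀ n, Lam n = ∑ i ∈ Icc 1 n, lam i) {k : ℕ}
    (hk : 1 ≤ k) : 0 < weight lam Lam k :=
  mul_pos (ratio_pos hlam hLam hk) (exp_pos _)

theorem lam_mul_weight_div (hlam : ∀ n, 0 < lam n) (hLam : ∀ n, Lam n = ∑ i ∈ Icc 1 n, lam i)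
    {k : ℕ} (hk : 1 ≤ k) : lam k * weight lam Lam k / Lam k = exp (growth lam Lam k) := by
  rw [weight, ← mul_assoc, mul_comm (lam k), ratio_mul hlam,
    mul_div_cancel_left₀ _ (Lam_pos hlam hLam hk).ne']

theorem lam_mul_log_weight (hlam : ∀ n, 0 < lam n) (hLam : ∀ n, Lam n = ∑ i ∈ Icc 1 n, lam i)
    (m : ℕ) : lam (m + 1) * log (weight lam Lam (m + 1)) =
      Lam (m + 1) * log (ratio lam Lam (m + 2)) - Lam m * log (ratio lam Lam (m + 1)) := by
  have hc := ratio_pos hlam hLam (Nat.le_add_left 1 m)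
  have hc' := ratio_pos hlam hLam (Nat.le_add_left 1 (m + 1))
  rw [weight, log_mul hc.ne' (exp_pos _).ne', log_exp, growth, log_div hc'.ne' hc.ne']
  linear_combination (log (ratio lam Lam (m + 2)) - log (ratio lam Lam (m + 1))) *
    ratio_mul (Lam := Lam) hlam (m + 1) - log (ratio lam Lam (m + 1)) * Lam_succ hLam m

theorem sum_lam_mul_log_weight (hlam : ∀ n, 0 < lam n)
    (hLam : ∀ n, Lam n = ∑ i ∈ Icc 1 n, lam i) (m : ℕ) :
    ∑ k ∈ Icc 1 m, lam k * log (weight lam Lam k) = Lam m * log (ratio lam Lam (m + 1)) := by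
  induction m with
  | zero => simp [hLam]
  | succ m ih =>
    rw [sum_Icc_succ_top (Nat.le_add_left 1 m), ih, lam_mul_log_weight hlam hLam]
    ring

theorem prod_weight_rpow (hlam : ∀ n, 0 < lam n) (hLam : ∀ n, Lam n = ∑ i ∈ Icc 1 n, lam i)
    {m : ℕ} (hm : 1 ≤ m) :
    ∏ k ∈ Icc 1 m, weight lam Lam k ^ (lam k / Lam m) = ratio lam Lam (m + 1) := by
  have hLm := (Lam_pos hlam hLam hm).ne'
  calc ∏ k ∈ Icc 1 m, weight lam Lam k ^ (lam k / Lam m)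
      = exp ((∑ k ∈ Icc 1 m, lam k * log (weight lam Lam k)) / Lam m) := by
        rw [sum_div, exp_sum]
        refine prod_congr rfl fun k hk => ?_
        rw [rpow_def_of_pos (weight_pos hlam hLam (mem_Icc.mp hk).1)]
        ring_nf
    _ = ratio lam Lam (m + 1) := by
        rw [sum_lam_mul_log_weight hlam hLam, mul_div_cancel_left₀ _ hLm,
          exp_log (ratio_pos hlam hLam (Nat.le_add_left 1 m))]

theorem inv_sub_inv_Lam_succ (hlam : ∀ n, 0 < lam n) (hLam : ∀ n, Lam n = ∑ i ∈ Icc 1 n, lam i)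
    {m : ℕ} (hm : 1 ≤ m) :
    (Lam m)⁻¹ - (Lam (m + 1))⁻¹ = (Lam m * ratio lam Lam (m + 1))⁻¹ := by
  have hLm := (Lam_pos hlam hLam hm).ne'
  have hLm' := (Lam_pos hlam hLam (Nat.le_add_left 1 m)).ne'
  rw [ratio, inv_sub_inv hLm hLm', Lam_succ hLam m, add_sub_cancel_left, ← Lam_succ hLam m]
  field_simp [(hlam (m + 1)).ne']

theorem prod_rpow_le (hlam : ∀ n, 0 < lam n) (hLam : ∀ n, Lam n = ∑ i ∈ Icc 1 n, lam i)
    {a : ℕ → ℝ} (ha : ∀ n, 0 ≤ a n) {m : ℕ} (hm : 1 ≤ m) :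
    ∏ k ∈ Icc 1 m, a k ^ (lam k / Lam m) ≤
      ((Lam m)⁻¹ - (Lam (m + 1))⁻¹) * ∑ k ∈ Icc 1 m, lam k * weight lam Lam k * a k := by
  have hLm := Lam_pos hlam hLam hm
  have hc := ratio_pos hlam hLam (Nat.le_add_left 1 m)
  have amgm := prod_rpow_mul_prod_rpow_le_sum (Icc 1 m) (w := fun k => lam k / Lam m)
    (fun k _ => (div_pos (hlam k) hLm).le)
    (by rw [← sum_div, ← hLam, div_self hLm.ne'])
    (fun k hk => (weight_pos hlam hLam (mem_Icc.mp hk).1).le) (fun k _ => ha k)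
  rw [prod_weight_rpow hlam hLam hm] at amgm
  rw [inv_sub_inv_Lam_succ hlam hLam hm, le_inv_mul_iff₀ (mul_pos hLm hc), mul_assoc]
  calc Lam m * (ratio lam Lam (m + 1) * ∏ k ∈ Icc 1 m, a k ^ (lam k / Lam m))
      ≤ Lam m * ∑ k ∈ Icc 1 m, lam k / Lam m * (weight lam Lam k * a k) := by gcongr
    _ = ∑ k ∈ Icc 1 m, lam k * weight lam Lam k * a k := by
      rw [mul_sum]
      refine sum_congr rfl fun k _ => ?_
      field_simp

theorem sum_prod_rpow_le (hlam : ∀ n, 0 < lam n) (hLam : ∀ n, Lam n = ∑ i ∈ Icc 1 n, lam i)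
    {a : ℕ → ℝ} (ha : ∀ n, 0 ≤ a n) (N : ℕ) :
    ∑ m ∈ Icc 1 N, ∏ k ∈ Icc 1 m, a k ^ (lam k / Lam m) ≤
      ∑ k ∈ Icc 1 N, exp (growth lam Lam k) * a k := calc
  _ ≤ ∑ m ∈ Icc 1 N, ((Lam m)⁻¹ - (Lam (m + 1))⁻¹) *
        ∑ k ∈ Icc 1 m, lam k * weight lam Lam k * a k :=
      sum_le_sum fun m hm => prod_rpow_le hlam hLam ha (mem_Icc.mp hm).1
  _ ≤ ∑ k ∈ Icc 1 N, (Lam k)⁻¹ * (lam k * weight lam Lam k * a k) :=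
      sum_Icc_sub_mul_sum_Icc_le N (inv_nonneg.mpr (Lam_pos hlam hLam (Nat.le_add_left 1 N)).le)
        fun k hk => mul_nonneg (mul_pos (hlam k) (weight_pos hlam hLam (mem_Icc.mp hk).1)).le
          (ha k)
  _ = ∑ k ∈ Icc 1 N, exp (growth lam Lam k) * a k := by
      refine sum_congr rfl fun k hk => ?_
      rw [← lam_mul_weight_div hlam hLam (mem_Icc.mp hk).1]
      ring

end WeightedCarleman

open WeightedCarleman in
/-- Corollary 1: weighted Carleman's inequality with constant `e^M`. -/
theorem weighted_carleman_log (M : ℝ)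
    (lam Lam : ℕ → ℝ) (hlam : ∀ n, 0 < lam n)
    (hLam : ∀ n, Lam n = ∑ i ∈ Finset.Icc 1 n, lam i)
    (hbdd : BddAbove (Set.range fun n : ℕ =>
      (Lam (n + 1) / lam (n + 1)) *
        Real.log ((Lam (n + 2) / lam (n + 2)) / (Lam (n + 1) / lam (n + 1)))))
    (hMdef : M = ⨆ n : ℕ, (Lam (n + 1) / lam (n + 1)) *
      Real.log ((Lam (n + 2) / lam (n + 2)) / (Lam (n + 1) / lam (n + 1))))
    (a : ℕ → ℝ) (ha : ∀ n, 0 ≤ a n)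
    (hs : Summable fun n : ℕ => a (n + 1)) :
    ∑' n : ℕ, ∏ k ∈ Finset.Icc 1 (n + 1), a k ^ (lam k / Lam (n + 1)) ≤
      Real.exp M * ∑' n : ℕ, a (n + 1) := by
  have hgrowth : ∀ k, 1 ≤ k → growth lam Lam k ≤ M := fun k hk => by
    obtain ⟨n, rfl⟩ := Nat.exists_eq_add_of_le' hk
    exact hMdef ▸ le_ciSup hbdd n
  refine tsum_le_of_sum_range_le (fun n => prod_nonneg fun k _ => rpow_nonneg (ha k) _)
    fun N => ?_
  rw [sum_range_add_one_eq_sum_Icc (fun m => ∏ k ∈ Icc 1 m, a k ^ (lam k / Lam m))]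
  calc ∑ m ∈ Icc 1 N, ∏ k ∈ Icc 1 m, a k ^ (lam k / Lam m)
      ≤ ∑ k ∈ Icc 1 N, exp (growth lam Lam k) * a k := sum_prod_rpow_le hlam hLam ha N
    _ ≤ ∑ k ∈ Icc 1 N, exp M * a k := by
      gcongr with k hk
      · exact ha k
      · exact hgrowth k (mem_Icc.mp hk).1
    _ = exp M * ∑ n ∈ range N, a (n + 1) := by rw [← mul_sum, sum_range_add_one_eq_sum_Icc]
    _ ≤ exp M * ∑' n, a (n + 1) := by
      gcongr
      exact hs.sum_le_tsum _ fun n _ => ha (n + 1)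
end

section
/- Let (\lambda_n) be positive reals with \Lambda_n = \sum_{i=1}^n \lambda_i, and let E = \sup_n (\Lambda_{n+1}/\lambda_{n+1}) \prod_{k=1}^n (\lambda_k/\Lambda_k)^{\lambda_k/\Lambda_n}. Then for any non-negative (a_n) with convergent sum, \sum_{n=1}^\infty \prod_{k=1}^n a_k^{\lambda_k/\Lambda_n} \le E \sum_{n=1}^\infty a_n (Bennett's theorem). -/
/-!
Write `a_k = (λ_k / Λ_k) · (Λ_k a_k / λ_k)` and apply weighted AM-GM with weights `λ_k / Λ_n`:
the `n`-th geometric mean is at most `P_n · S_n / Λ_n`, where `P_n = ∏ (λ_k / Λ_k)^(λ_k / Λ_n)`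
and `S_n = ∑_{k ≤ n} Λ_k a_k`. By definition of `E`, `P_n ≤ E λ_{n+1} / Λ_{n+1}`, so the `n`-th
term is at most `E (1 / Λ_n - 1 / Λ_{n+1}) S_n`. Summation by parts turns the sum of these bounds
into `E (∑_{k ≤ N} a_k - S_N / Λ_{N+1}) ≤ E ∑ a_k`.
-/

open Finset

theorem geom_mean_le_geom_mean_mul_arith_mean_div {ι : Type*} (s : Finset ι) (w c a : ι → ℝ)
    (hw : ∀ i ∈ s, 0 ≤ w i) (hw₁ : ∑ i ∈ s, w i = 1) (hc : ∀ i ∈ s, 0 < c i)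
    (ha : ∀ i ∈ s, 0 ≤ a i) :
    ∏ i ∈ s, a i ^ w i ≤ (∏ i ∈ s, c i ^ w i) * ∑ i ∈ s, w i * (a i / c i) := by
  have hsplit : ∏ i ∈ s, a i ^ w i = (∏ i ∈ s, c i ^ w i) * ∏ i ∈ s, (a i / c i) ^ w i := by
    rw [← prod_mul_distrib]
    refine prod_congr rfl fun i hi => ?_
    rw [← Real.mul_rpow (hc i hi).le (div_nonneg (ha i hi) (hc i hi).le),
      mul_div_cancel₀ _ (hc i hi).ne']
  rw [hsplit]
  gcongr
  · exact prod_nonneg fun i hi => Real.rpow_nonneg (hc i hi).le _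
  · exact Real.geom_mean_le_arith_mean_weighted s w _ hw hw₁
      fun i hi => div_nonneg (ha i hi) (hc i hi).le

theorem sum_Icc_inv_sub_inv_mul_partial_sum (L b : ℕ → ℝ) (hL : ∀ k, 1 ≤ k → L k ≠ 0) (N : ℕ) :
    ∑ n ∈ Icc 1 N, (1 / L n - 1 / L (n + 1)) * ∑ k ∈ Icc 1 n, L k * b k =
      ∑ k ∈ Icc 1 N, b k - (∑ k ∈ Icc 1 N, L k * b k) / L (N + 1) := by
  induction N with
  | zero => simp
  | succ N ih =>
    have h₁ := hL (N + 1) (by omega)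
    have h₂ := hL (N + 2) (by omega)
    simp only [sum_Icc_succ_top (Nat.le_add_left 1 N), ih]
    field_simp
    ring

theorem sum_range_eq_sum_Icc_one {M : Type*} [AddCommMonoid M] (f : ℕ → M) (N : ℕ) :
    ∑ n ∈ range N, f (n + 1) = ∑ n ∈ Icc 1 N, f n := by
  rw [range_eq_Ico, sum_Ico_add', zero_add, Ico_add_one_right_eq_Icc]

section PartialSums

variable {lam Lam : ℕ → ℝ}

theorem Lam_pos (hlam : ∀ n, 0 < lam n) (hLam : ∀ n, Lam n = ∑ i ∈ Icc 1 n, lam i) {n : ℕ}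
    (hn : 1 ≤ n) : 0 < Lam n := by
  rw [hLam]
  exact sum_pos (fun i _ => hlam i) (nonempty_Icc.2 hn)

theorem one_div_sub_one_div_Lam_succ (hlam : ∀ n, 0 < lam n)
    (hLam : ∀ n, Lam n = ∑ i ∈ Icc 1 n, lam i) {n : ℕ} (hn : 1 ≤ n) :
    1 / Lam n - 1 / Lam (n + 1) = lam (n + 1) / Lam (n + 1) / Lam n := by
  have hsucc : Lam (n + 1) = Lam n + lam (n + 1) := by
    rw [hLam, hLam, sum_Icc_succ_top (Nat.le_add_left 1 n)]
  have h₁ := (Lam_pos hlam hLam hn).ne'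
  have h₂ := (Lam_pos hlam hLam (Nat.le_add_left 1 n)).ne'
  field_simp
  linarith

theorem prod_rpow_le_prod_rpow_mul_sum_div (hlam : ∀ n, 0 < lam n)
    (hLam : ∀ n, Lam n = ∑ i ∈ Icc 1 n, lam i) {a : ℕ → ℝ} (ha : ∀ n, 0 ≤ a n) {m : ℕ}
    (hm : 1 ≤ m) :
    ∏ k ∈ Icc 1 m, a k ^ (lam k / Lam m) ≤
      (∏ k ∈ Icc 1 m, (lam k / Lam k) ^ (lam k / Lam m)) *
        ((∑ k ∈ Icc 1 m, Lam k * a k) / Lam m) := by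
  have hLm := Lam_pos hlam hLam hm
  have hLk : ∀ k ∈ Icc 1 m, 0 < Lam k := fun k hk => Lam_pos hlam hLam (mem_Icc.1 hk).1
  convert geom_mean_le_geom_mean_mul_arith_mean_div _ (fun k => lam k / Lam m) _ a
    (fun k _ => div_nonneg (hlam k).le hLm.le) ?_ (fun k hk => div_pos (hlam k) (hLk k hk))
    (fun k _ => ha k) using 2
  · rw [sum_div]
    refine sum_congr rfl fun k hk => ?_
    have := (hlam k).ne'
    have := (hLk k hk).ne'
    field_simp
  · rw [← sum_div, ← hLam, div_self hLm.ne']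

theorem prod_rpow_le_of_bennett_factor_le (hlam : ∀ n, 0 < lam n)
    (hLam : ∀ n, Lam n = ∑ i ∈ Icc 1 n, lam i) {a : ℕ → ℝ} (ha : ∀ n, 0 ≤ a n) {m : ℕ}
    (hm : 1 ≤ m) {C : ℝ}
    (hC : (Lam (m + 1) / lam (m + 1)) *
      ∏ k ∈ Icc 1 m, (lam k / Lam k) ^ (lam k / Lam m) ≤ C) :
    ∏ k ∈ Icc 1 m, a k ^ (lam k / Lam m) ≤
      C * ((1 / Lam m - 1 / Lam (m + 1)) * ∑ k ∈ Icc 1 m, Lam k * a k) := by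
  have hratio : 0 < lam (m + 1) / Lam (m + 1) :=
    div_pos (hlam _) (Lam_pos hlam hLam (Nat.le_add_left 1 m))
  have hP : ∏ k ∈ Icc 1 m, (lam k / Lam k) ^ (lam k / Lam m) ≤
      C * (lam (m + 1) / Lam (m + 1)) := by
    rwa [← div_le_iff₀ hratio, div_div_eq_mul_div, mul_div_assoc, mul_comm]
  have hS : 0 ≤ (∑ k ∈ Icc 1 m, Lam k * a k) / Lam m :=
    div_nonneg (sum_nonneg fun k hk => mul_nonneg (Lam_pos hlam hLam (mem_Icc.1 hk).1).le (ha k))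
      (Lam_pos hlam hLam hm).le
  calc ∏ k ∈ Icc 1 m, a k ^ (lam k / Lam m)
      ≤ (∏ k ∈ Icc 1 m, (lam k / Lam k) ^ (lam k / Lam m)) *
          ((∑ k ∈ Icc 1 m, Lam k * a k) / Lam m) :=
        prod_rpow_le_prod_rpow_mul_sum_div hlam hLam ha hm
    _ ≤ C * (lam (m + 1) / Lam (m + 1)) * ((∑ k ∈ Icc 1 m, Lam k * a k) / Lam m) := by gcongr
    _ = C * ((1 / Lam m - 1 / Lam (m + 1)) * ∑ k ∈ Icc 1 m, Lam k * a k) := by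
        rw [one_div_sub_one_div_Lam_succ hlam hLam hm]; ring

end PartialSums

/-- Bennett's theorem on weighted Carleman's inequality. -/
theorem bennett_weighted_carleman (E : ℝ)
    (lam Lam : ℕ → ℝ) (hlam : ∀ n, 0 < lam n)
    (hLam : ∀ n, Lam n = ∑ i ∈ Finset.Icc 1 n, lam i)
    (hbdd : BddAbove (Set.range fun n : ℕ =>
      (Lam (n + 2) / lam (n + 2)) *
        ∏ k ∈ Finset.Icc 1 (n + 1), (lam k / Lam k) ^ (lam k / Lam (n + 1))))
    (hEdef : E = ⨆ n : ℕ, (Lam (n + 2) / lam (n + 2)) *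
      ∏ k ∈ Finset.Icc 1 (n + 1), (lam k / Lam k) ^ (lam k / Lam (n + 1)))
    (a : ℕ → ℝ) (ha : ∀ n, 0 ≤ a n)
    (hs : Summable fun n : ℕ => a (n + 1)) :
    ∑' n : ℕ, ∏ k ∈ Finset.Icc 1 (n + 1), a k ^ (lam k / Lam (n + 1)) ≤
      E * ∑' n : ℕ, a (n + 1) := by
  have hE : ∀ n, (Lam (n + 2) / lam (n + 2)) *
      ∏ k ∈ Icc 1 (n + 1), (lam k / Lam k) ^ (lam k / Lam (n + 1)) ≤ E :=
    fun n => hEdef ▸ le_ciSup hbdd n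
  have hLk : ∀ k, 1 ≤ k → 0 < Lam k := fun k hk => Lam_pos hlam hLam hk
  have hE₀ : 0 ≤ E := by
    refine le_trans (mul_nonneg (div_nonneg (hLk 2 (by norm_num)).le (hlam 2).le) ?_) (hE 0)
    exact prod_nonneg fun k hk =>
      Real.rpow_nonneg (div_nonneg (hlam k).le (hLk k (mem_Icc.1 hk).1).le) _
  refine Real.tsum_le_of_sum_range_le
    (fun n => prod_nonneg fun k _ => Real.rpow_nonneg (ha k) _) fun N => ?_
  calc ∑ n ∈ range N, ∏ k ∈ Icc 1 (n + 1), a k ^ (lam k / Lam (n + 1))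
      = ∑ m ∈ Icc 1 N, ∏ k ∈ Icc 1 m, a k ^ (lam k / Lam m) :=
        sum_range_eq_sum_Icc_one (fun m => ∏ k ∈ Icc 1 m, a k ^ (lam k / Lam m)) N
    _ ≤ ∑ m ∈ Icc 1 N, E * ((1 / Lam m - 1 / Lam (m + 1)) * ∑ k ∈ Icc 1 m, Lam k * a k) := by
        refine sum_le_sum fun m hm => ?_
        obtain ⟨n, rfl⟩ : ∃ n, m = n + 1 := ⟨m - 1, by grind⟩
        exact prod_rpow_le_of_bennett_factor_le hlam hLam ha (Nat.le_add_left 1 n) (hE n)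
    _ = E * (∑ k ∈ Icc 1 N, a k - (∑ k ∈ Icc 1 N, Lam k * a k) / Lam (N + 1)) := by
        rw [← mul_sum, sum_Icc_inv_sub_inv_mul_partial_sum Lam a
          fun k hk => (hLk k hk).ne']
    _ ≤ E * ∑' n, a (n + 1) := by
        refine mul_le_mul_of_nonneg_left (sub_le_self _ ?_ |>.trans ?_) hE₀
        · exact div_nonneg (sum_nonneg fun k hk => mul_nonneg (hLk k (mem_Icc.1 hk).1).le (ha k))
            (hLk (N + 1) (Nat.le_add_left 1 N)).le
        · rw [← sum_range_eq_sum_Icc_one]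
          exact hs.sum_le_tsum _ fun n _ => ha _
end

section
/- Pečarić–Stolarsky inequality: Let (\lambda_n) be positive, \Lambda_n = \sum_{i=1}^n \lambda_i, (a_n) non-negative, (b_n) positive, and G_n = \prod_{k=1}^n a_k^{\lambda_k/\Lambda_n}. Then for every N \ge 1, \sum_{n=1}^N \Lambda_n (b_n - 1) G_n + \Lambda_N G_N \le \sum_{n=1}^N \lambda_n a_n b_n^{\Lambda_n/\lambda_n}. -/
/-!
The geometric means satisfy `G_{n+1} = G_n ^ (Λ_n / Λ_{n+1}) * a_{n+1} ^ (λ_{n+1} / Λ_{n+1})`.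
Multiplying by `b_{n+1}`, absorbing it into the second factor and applying the weighted AM–GM
inequality gives
`Λ_{n+1} b_{n+1} G_{n+1} ≤ Λ_n G_n + λ_{n+1} a_{n+1} b_{n+1} ^ (Λ_{n+1} / λ_{n+1})`.
Summing these one-step inequalities telescopes to the theorem.
-/

open Finset Real

lemma add_mul_rpow_mul_rpow_mul_le {x y b L l : ℝ} (hx : 0 ≤ x) (hy : 0 ≤ y) (hb : 0 ≤ b)
    (hL : 0 ≤ L) (hl : 0 < l) :
    (L + l) * (x ^ (L / (L + l)) * y ^ (l / (L + l)) * b) ≤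
      L * x + l * (y * b ^ ((L + l) / l)) := by
  have hLl : 0 < L + l := by positivity
  have hw : L / (L + l) + l / (L + l) = 1 := by rw [← add_div, div_self hLl.ne']
  have hb_absorbed : (y * b ^ ((L + l) / l)) ^ (l / (L + l)) = y ^ (l / (L + l)) * b := by
    rw [mul_rpow hy (rpow_nonneg hb _), ← rpow_mul hb,
      div_mul_div_cancel₀ hl.ne', div_self hLl.ne', rpow_one]
  have amgm := geom_mean_le_arith_mean2_weighted (div_nonneg hL hLl.le) (div_nonneg hl.le hLl.le)
    hx (mul_nonneg hy (rpow_nonneg hb ((L + l) / l))) hw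
  rw [hb_absorbed, ← mul_assoc] at amgm
  calc (L + l) * (x ^ (L / (L + l)) * y ^ (l / (L + l)) * b)
      ≤ (L + l) * (L / (L + l) * x + l / (L + l) * (y * b ^ ((L + l) / l))) := by gcongr
    _ = L * x + l * (y * b ^ ((L + l) / l)) := by field_simp

noncomputable def weightedGeomMean (lam a : ℕ → ℝ) (n : ℕ) : ℝ :=
  ∏ k ∈ Icc 1 n, a k ^ (lam k / ∑ i ∈ Icc 1 n, lam i)

section

variable {lam a : ℕ → ℝ}

lemma weightedGeomMean_nonneg (ha : ∀ n, 0 ≤ a n) (n : ℕ) : 0 ≤ weightedGeomMean lam a n :=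
  prod_nonneg fun k _ => rpow_nonneg (ha k) _

lemma weightedGeomMean_succ (hlam : ∀ n, 0 < lam n) (ha : ∀ n, 0 ≤ a n) (n : ℕ) :
    weightedGeomMean lam a (n + 1) =
      weightedGeomMean lam a n ^ ((∑ i ∈ Icc 1 n, lam i) / ∑ i ∈ Icc 1 (n + 1), lam i) *
        a (n + 1) ^ (lam (n + 1) / ∑ i ∈ Icc 1 (n + 1), lam i) := by
  unfold weightedGeomMean
  rw [prod_Icc_succ_top (Nat.le_add_left 1 n)]
  congr 1
  rcases Nat.eq_zero_or_pos n with rfl | hn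
  · simp
  have hΛ : 0 < ∑ i ∈ Icc 1 n, lam i :=
    sum_pos (fun i _ => hlam i) ⟨1, mem_Icc.mpr ⟨le_rfl, hn⟩⟩
  rw [← finsetProd_rpow _ _ fun k _ => rpow_nonneg (ha k) _]
  refine prod_congr rfl fun k _ => ?_
  rw [← rpow_mul (ha k), div_mul_div_cancel₀ hΛ.ne']

lemma succ_mul_weightedGeomMean_le (hlam : ∀ n, 0 < lam n) (ha : ∀ n, 0 ≤ a n) {b : ℝ}
    (hb : 0 ≤ b) (n : ℕ) :
    (∑ i ∈ Icc 1 (n + 1), lam i) * b * weightedGeomMean lam a (n + 1) ≤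
      (∑ i ∈ Icc 1 n, lam i) * weightedGeomMean lam a n +
        lam (n + 1) * a (n + 1) * b ^ ((∑ i ∈ Icc 1 (n + 1), lam i) / lam (n + 1)) := by
  have hΛ : ∑ i ∈ Icc 1 (n + 1), lam i = ∑ i ∈ Icc 1 n, lam i + lam (n + 1) :=
    sum_Icc_succ_top (Nat.le_add_left 1 n) lam
  have step := add_mul_rpow_mul_rpow_mul_le (weightedGeomMean_nonneg (lam := lam) ha n)
    (ha (n + 1)) hb (sum_nonneg (s := Icc 1 n) fun i _ => (hlam i).le) (hlam (n + 1))
  rw [← hΛ] at step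
  rw [weightedGeomMean_succ hlam ha]
  linarith

theorem sum_mul_sub_one_mul_weightedGeomMean_le (hlam : ∀ n, 0 < lam n) (ha : ∀ n, 0 ≤ a n)
    {b : ℕ → ℝ} (hb : ∀ n, 0 ≤ b n) (N : ℕ) :
    ∑ n ∈ Icc 1 N, (∑ i ∈ Icc 1 n, lam i) * (b n - 1) * weightedGeomMean lam a n +
        (∑ i ∈ Icc 1 N, lam i) * weightedGeomMean lam a N ≤
      ∑ n ∈ Icc 1 N, lam n * a n * b n ^ ((∑ i ∈ Icc 1 n, lam i) / lam n) := by
  induction N with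
  | zero => simp
  | succ m ih =>
    rw [sum_Icc_succ_top (Nat.le_add_left 1 m)
        (fun n => (∑ i ∈ Icc 1 n, lam i) * (b n - 1) * weightedGeomMean lam a n),
      sum_Icc_succ_top (Nat.le_add_left 1 m)
        (fun n => lam n * a n * b n ^ ((∑ i ∈ Icc 1 n, lam i) / lam n))]
    linarith [succ_mul_weightedGeomMean_le hlam ha (hb (m + 1)) m]

end

theorem pecaric_stolarsky_general
    (lam Lam a b G : ℕ → ℝ) (hlam : ∀ n, 0 < lam n)
    (hLam : ∀ n, Lam n = ∑ i ∈ Finset.Icc 1 n, lam i)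
    (ha : ∀ n, 0 ≤ a n) (hb : ∀ n, 0 < b n)
    (hG : ∀ n, G n = ∏ k ∈ Finset.Icc 1 n, a k ^ (lam k / Lam n))
    (N : ℕ) :
    ∑ n ∈ Finset.Icc 1 N, Lam n * (b n - 1) * G n + Lam N * G N ≤
      ∑ n ∈ Finset.Icc 1 N, lam n * a n * b n ^ (Lam n / lam n) := by
  obtain rfl : Lam = fun n => ∑ i ∈ Icc 1 n, lam i := funext hLam
  obtain rfl : G = weightedGeomMean lam a := funext hG
  exact sum_mul_sub_one_mul_weightedGeomMean_le hlam ha (fun n => (hb n).le) N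

/-- The Pečarić–Stolarsky inequality. -/
theorem pecaric_stolarsky
    (lam Lam a b G : ℕ → ℝ) (hlam : ∀ n, 0 < lam n)
    (hLam : ∀ n, Lam n = ∑ i ∈ Finset.Icc 1 n, lam i)
    (ha : ∀ n, 0 ≤ a n) (hb : ∀ n, 0 < b n)
    (hG : ∀ n, G n = ∏ k ∈ Finset.Icc 1 n, a k ^ (lam k / Lam n))
    (N : ℕ) (hN : 1 ≤ N) :
    ∑ n ∈ Finset.Icc 1 N, Lam n * (b n - 1) * G n + Lam N * G N ≤
      ∑ n ∈ Finset.Icc 1 N, lam n * a n * b n ^ (Lam n / lam n) :=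
  pecaric_stolarsky_general lam Lam a b G hlam hLam ha hb hG N
end

section
/- Let p > 1, (\lambda_n) positive, \Lambda_n = \sum_{i=1}^n \lambda_i, (w_n) positive, (a_n) non-negative, A_n = (\sum_{k=1}^n \lambda_k a_k)/\Lambda_n. Then for every N \ge 1: \sum_{n=1}^N (\sum_{k=1}^n w_k)^{-(p-1)} (w_n^{p-1}/\lambda_n^p - w_{n+1}^{p-1}/\lambda_{n+1}^p) \Lambda_n^p A_n^p \le \sum_{n=1}^N a_n^p. -/
/-!
Write `W n = ∑_{k ≤ n} w k`, `S n = ∑_{k ≤ n} lam k a k = Lam n A n`,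
`d n = w n ^ (p-1) / lam n ^ p` and `T n = W n ^ (1-p) S n ^ p`; the `n`-th summand is
`(d n - d (n+1)) T n`. Summation by parts turns the left side into
`∑ d n (T n - T (n-1)) - d (N+1) T N`. The map `(x, s) ↦ x ^ (1-p) s ^ p = x (s/x) ^ p` is the
perspective of the convex function `t ↦ t ^ p`, hence subadditive, so
`T n - T (n-1) ≤ w n ^ (1-p) (lam n a n) ^ p`, and `d n` times this bound is exactly `a n ^ p`.
-/

open Finset Real

lemma rpow_one_sub_mul_rpow_eq_mul_div_rpow {p x a : ℝ} (hx : 0 < x) (ha : 0 ≤ a) :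
    x ^ (1 - p) * a ^ p = x * (a / x) ^ p := by
  rw [rpow_sub hx, rpow_one, div_rpow ha hx.le]
  ring

lemma rpow_one_sub_mul_rpow_add_le {p x y a b : ℝ} (hp : 1 ≤ p) (hx : 0 < x) (hy : 0 < y)
    (ha : 0 ≤ a) (hb : 0 ≤ b) :
    (x + y) ^ (1 - p) * (a + b) ^ p ≤ x ^ (1 - p) * a ^ p + y ^ (1 - p) * b ^ p := by
  have hxy : 0 < x + y := add_pos hx hy
  have hjensen : ((x / (x + y)) • (a / x) + (y / (x + y)) • (b / y)) ^ p
      ≤ (x / (x + y)) • (a / x) ^ p + (y / (x + y)) • (b / y) ^ p :=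
    (convexOn_rpow hp).2 (Set.mem_Ici.2 (div_nonneg ha hx.le))
      (Set.mem_Ici.2 (div_nonneg hb hy.le)) (div_nonneg hx.le hxy.le)
      (div_nonneg hy.le hxy.le) (by field_simp)
  have hmean : (x / (x + y)) • (a / x) + (y / (x + y)) • (b / y) = (a + b) / (x + y) := by
    simp only [smul_eq_mul]
    field_simp
  rw [hmean] at hjensen
  simp only [smul_eq_mul] at hjensen
  rw [rpow_one_sub_mul_rpow_eq_mul_div_rpow hxy (add_nonneg ha hb),
    rpow_one_sub_mul_rpow_eq_mul_div_rpow hx ha, rpow_one_sub_mul_rpow_eq_mul_div_rpow hy hb]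
  calc (x + y) * ((a + b) / (x + y)) ^ p
      ≤ (x + y) * (x / (x + y) * (a / x) ^ p + y / (x + y) * (b / y) ^ p) := by gcongr
    _ = x * (a / x) ^ p + y * (b / y) ^ p := by field_simp

lemma rpow_one_sub_mul_rpow_sum_Icc_succ_le {p : ℝ} (hp : 1 ≤ p) {w s : ℕ → ℝ}
    (hw : ∀ n, 0 < w n) (hs : ∀ n, 0 ≤ s n) (n : ℕ) :
    (∑ k ∈ Icc 1 (n + 1), w k) ^ (1 - p) * (∑ k ∈ Icc 1 (n + 1), s k) ^ p ≤
      (∑ k ∈ Icc 1 n, w k) ^ (1 - p) * (∑ k ∈ Icc 1 n, s k) ^ p +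
        w (n + 1) ^ (1 - p) * s (n + 1) ^ p := by
  rw [sum_Icc_succ_top (by omega) w, sum_Icc_succ_top (by omega) s]
  rcases n with _ | n
  · simp [zero_rpow (by linarith : p ≠ 0)]
  · exact rpow_one_sub_mul_rpow_add_le hp
      (sum_pos (fun k _ => hw k) (nonempty_Icc.2 (by omega))) (hw _)
      (sum_nonneg fun k _ => hs k) (hs _)

lemma rpow_sub_one_div_rpow_mul_rpow_one_sub_mul_rpow {p w l a : ℝ} (hw : 0 < w) (hl : 0 < l)
    (ha : 0 ≤ a) : w ^ (p - 1) / l ^ p * (w ^ (1 - p) * (l * a) ^ p) = a ^ p := by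
  have hw_cancel : w ^ (p - 1) * w ^ (1 - p) = 1 := by
    rw [← rpow_add hw, sub_add_sub_cancel', sub_self, rpow_zero]
  have hl_pow : l ^ p ≠ 0 := (rpow_pos_of_pos hl p).ne'
  rw [mul_rpow hl.le ha]
  field_simp
  linear_combination a ^ p * hw_cancel

lemma sum_Icc_sub_succ_mul_eq {R : Type*} [CommRing R] (f g : ℕ → R) (hg : g 0 = 0) (N : ℕ) :
    ∑ n ∈ Icc 1 N, (f n - f (n + 1)) * g n =
      ∑ n ∈ Icc 1 N, f n * (g n - g (n - 1)) - f (N + 1) * g N := by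
  induction N with
  | zero => simp [hg]
  | succ N ih =>
    rw [sum_Icc_succ_top (by omega), sum_Icc_succ_top (by omega), ih, Nat.add_sub_cancel]
    ring

theorem ineq_5_3_general (p : ℝ) (hp : 1 < p)
    (lam Lam w a A : ℕ → ℝ) (hlam : ∀ n, 0 < lam n)
    (hLam : ∀ n, Lam n = ∑ i ∈ Finset.Icc 1 n, lam i)
    (hw : ∀ n, 0 < w n) (ha : ∀ n, 0 ≤ a n)
    (hA : ∀ n, A n = (∑ k ∈ Finset.Icc 1 n, lam k * a k) / Lam n)
    (N : ℕ) :
    ∑ n ∈ Finset.Icc 1 N,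
        (∑ k ∈ Finset.Icc 1 n, w k) ^ (-(p - 1)) *
          (w n ^ (p - 1) / lam n ^ p - w (n + 1) ^ (p - 1) / lam (n + 1) ^ p) *
          Lam n ^ p * A n ^ p ≤
      ∑ n ∈ Finset.Icc 1 N, a n ^ p := by
  have hla : ∀ n, 0 ≤ lam n * a n := fun n => mul_nonneg (hlam n).le (ha n)
  set d : ℕ → ℝ := fun n => w n ^ (p - 1) / lam n ^ p
  set T : ℕ → ℝ := fun n =>
    (∑ k ∈ Icc 1 n, w k) ^ (1 - p) * (∑ k ∈ Icc 1 n, lam k * a k) ^ p with hT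
  have hd_nonneg : ∀ n, 0 ≤ d n := fun n => by have := hlam n; have := hw n; positivity
  have hsummand : ∀ n ∈ Icc 1 N,
      (∑ k ∈ Icc 1 n, w k) ^ (-(p - 1)) * (d n - d (n + 1)) * Lam n ^ p * A n ^ p =
        (d n - d (n + 1)) * T n := by
    intro n hn
    have hLam_pos : 0 < Lam n :=
      hLam n ▸ sum_pos (fun k _ => hlam k) (nonempty_Icc.2 (mem_Icc.1 hn).1)
    rw [hT, hA n, mul_assoc _ (Lam n ^ p),
      ← mul_rpow hLam_pos.le (div_nonneg (sum_nonneg fun k _ => hla k) hLam_pos.le),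
      mul_div_cancel₀ _ hLam_pos.ne', neg_sub]
    ring
  have hstep : ∀ n ∈ Icc 1 N, d n * (T n - T (n - 1)) ≤ a n ^ p := by
    intro n hn
    obtain ⟨m, rfl⟩ : ∃ m, n = m + 1 := ⟨n - 1, by grind⟩
    rw [Nat.add_sub_cancel,
      ← rpow_sub_one_div_rpow_mul_rpow_one_sub_mul_rpow (hw _) (hlam _) (ha (m + 1))]
    gcongr
    · exact hd_nonneg _
    · linarith [rpow_one_sub_mul_rpow_sum_Icc_succ_le hp.le hw hla m]
  have hT_nonneg : 0 ≤ T N :=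
    mul_nonneg (rpow_nonneg (sum_nonneg fun k _ => (hw k).le) _)
      (rpow_nonneg (sum_nonneg fun k _ => hla k) _)
  rw [sum_congr rfl hsummand,
    sum_Icc_sub_succ_mul_eq d T (by simp [hT, zero_rpow (by linarith : p ≠ 0)])]
  linarith [sum_le_sum hstep, mul_nonneg (hd_nonneg (N + 1)) hT_nonneg]

/-- Inequality (5.3) of the paper. -/
theorem ineq_5_3 (p : ℝ) (hp : 1 < p)
    (lam Lam w a A : ℕ → ℝ) (hlam : ∀ n, 0 < lam n)
    (hLam : ∀ n, Lam n = ∑ i ∈ Finset.Icc 1 n, lam i)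
    (hw : ∀ n, 0 < w n) (ha : ∀ n, 0 ≤ a n)
    (hA : ∀ n, A n = (∑ k ∈ Finset.Icc 1 n, lam k * a k) / Lam n)
    (N : ℕ) (hN : 1 ≤ N) :
    ∑ n ∈ Finset.Icc 1 N,
        (∑ k ∈ Finset.Icc 1 n, w k) ^ (-(p - 1)) *
          (w n ^ (p - 1) / lam n ^ p - w (n + 1) ^ (p - 1) / lam (n + 1) ^ p) *
          Lam n ^ p * A n ^ p ≤
      ∑ n ∈ Finset.Icc 1 N, a n ^ p :=
  ineq_5_3_general p hp lam Lam w a A hlam hLam hw ha hA N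
end

section
/- Let p > 1, (\lambda_n) positive, \Lambda_n = \sum_{i=1}^n \lambda_i, (b_n) positive, (a_n) non-negative, A_n = (\sum_{k=1}^n \lambda_k a_k)/\Lambda_n. Then for every N \ge 1: \sum_{n=1}^N ((\sum_{k=1}^n \lambda_k \prod_{i=k}^n b_i^{1/(p-1)})/\Lambda_n)^{-(p-1)} (b_n/\lambda_n - 1/\lambda_{n+1}) \Lambda_n A_n^p \le \sum_{n=1}^N a_n^p. -/
/-!
Write `f i = b i ^ (1 / (p - 1))`, `S n = ∑_{k ≤ n} λ_k ∏_{i=k}^n f_i`, `T n = ∑_{k ≤ n} λ_k a_k` and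
`Φ n = T n ^ p / S n ^ (p - 1)`. The `n`-th summand on the left is `b n Φ n / λ_n - Φ n / λ_{n+1}`.
Since `S (n+1) = f (n+1) (S n + λ_{n+1})` and `f ^ (p - 1) = b`, Radon's inequality
`(x + y)^p / (s + t)^(p-1) ≤ x^p / s^(p-1) + y^p / t^(p-1)` (convexity of `x ↦ x ^ p`) gives
`b (n+1) Φ (n+1) ≤ Φ n + λ_{n+1} a_{n+1}^p`, and the left-hand side telescopes.
-/

open Finset

namespace WeightedHardy

lemma rpow_div_rpow_sub_one_eq {p x s : ℝ} (hx : 0 ≤ x) (hs : 0 < s) :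
    x ^ p / s ^ (p - 1) = s * (x / s) ^ p := by
  rw [Real.div_rpow hx hs.le, Real.rpow_sub_one hs.ne']
  field_simp

lemma add_rpow_div_add_rpow_sub_one_le {p x y s t : ℝ} (hp : 1 ≤ p) (hx : 0 ≤ x) (hy : 0 ≤ y)
    (hs : 0 < s) (ht : 0 < t) :
    (x + y) ^ p / (s + t) ^ (p - 1) ≤ x ^ p / s ^ (p - 1) + y ^ p / t ^ (p - 1) := by
  have hst : 0 < s + t := hs.trans (lt_add_of_pos_right s ht)
  have hconv := (convexOn_rpow hp).2 (Set.mem_Ici.2 (div_nonneg hx hs.le))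
    (Set.mem_Ici.2 (div_nonneg hy ht.le)) (div_nonneg hs.le hst.le) (div_nonneg ht.le hst.le)
    (by field_simp)
  have hmix : s / (s + t) * (x / s) + t / (s + t) * (y / t) = (x + y) / (s + t) := by
    field_simp
  simp only [smul_eq_mul, hmix] at hconv
  rw [rpow_div_rpow_sub_one_eq (add_nonneg hx hy) hst, rpow_div_rpow_sub_one_eq hx hs,
    rpow_div_rpow_sub_one_eq hy ht]
  calc (s + t) * ((x + y) / (s + t)) ^ p
      ≤ (s + t) * (s / (s + t) * (x / s) ^ p + t / (s + t) * (y / t) ^ p) := by gcongr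
    _ = s * (x / s) ^ p + t * (y / t) ^ p := by field_simp

lemma div_rpow_neg_mul_mul_div_rpow {p s l x : ℝ} (c : ℝ) (hs : 0 < s) (hl : 0 < l)
    (hx : 0 ≤ x) :
    (s / l) ^ (-(p - 1)) * c * l * (x / l) ^ p = c * (x ^ p / s ^ (p - 1)) := by
  rw [Real.rpow_neg (div_nonneg hs.le hl.le), Real.div_rpow hs.le hl.le, Real.div_rpow hx hl.le,
    Real.rpow_sub_one hs.ne', Real.rpow_sub_one hl.ne']
  field_simp

lemma sum_Icc_sub_add_le {x y g : ℕ → ℝ} (h : ∀ n, x (n + 1) ≤ y (n + 1) + g n) (N : ℕ) :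
    ∑ n ∈ Icc 1 N, (x n - g n) + g N ≤ ∑ n ∈ Icc 1 N, y n + g 0 := by
  induction N with
  | zero => simp
  | succ N ih =>
    rw [sum_Icc_succ_top (by omega), sum_Icc_succ_top (by omega)]
    linarith [h N]

noncomputable section

variable (lam f a : ℕ → ℝ)

def tailProdSum (n : ℕ) : ℝ :=
  ∑ k ∈ Icc 1 n, lam k * ∏ i ∈ Icc k n, f i

def partialSum (n : ℕ) : ℝ :=
  ∑ k ∈ Icc 1 n, lam k * a k

def potential (p : ℝ) (n : ℕ) : ℝ :=
  partialSum lam a n ^ p / tailProdSum lam f n ^ (p - 1)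

variable {lam f a}

lemma tailProdSum_succ (n : ℕ) :
    tailProdSum lam f (n + 1) = f (n + 1) * (tailProdSum lam f n + lam (n + 1)) := by
  simp only [tailProdSum]
  rw [sum_Icc_succ_top (by omega), Icc_self, prod_singleton, mul_add, mul_sum]
  congr 1
  · refine sum_congr rfl fun k hk => ?_
    rw [prod_Icc_succ_top (by grind)]
    ring
  · ring

lemma tailProdSum_pos (hlam : ∀ n, 0 < lam n) (hf : ∀ n, 0 < f n) {n : ℕ} (hn : 1 ≤ n) :
    0 < tailProdSum lam f n :=
  sum_pos (fun k _ => mul_pos (hlam k) (prod_pos fun i _ => hf i)) (nonempty_Icc.2 hn)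

lemma partialSum_succ (n : ℕ) :
    partialSum lam a (n + 1) = partialSum lam a n + lam (n + 1) * a (n + 1) :=
  sum_Icc_succ_top (by omega) _

lemma tailProdSum_nonneg (hlam : ∀ n, 0 < lam n) (hf : ∀ n, 0 < f n) (n : ℕ) :
    0 ≤ tailProdSum lam f n :=
  sum_nonneg fun k _ => mul_nonneg (hlam k).le (prod_nonneg fun i _ => (hf i).le)

lemma partialSum_nonneg (hlam : ∀ n, 0 < lam n) (ha : ∀ n, 0 ≤ a n) (n : ℕ) :
    0 ≤ partialSum lam a n :=
  sum_nonneg fun k _ => mul_nonneg (hlam k).le (ha k)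

lemma potential_nonneg (p : ℝ) (hlam : ∀ n, 0 < lam n) (hf : ∀ n, 0 < f n)
    (ha : ∀ n, 0 ≤ a n) (n : ℕ) : 0 ≤ potential lam f a p n :=
  div_nonneg (Real.rpow_nonneg (partialSum_nonneg hlam ha n) _)
    (Real.rpow_nonneg (tailProdSum_nonneg hlam hf n) _)

lemma potential_zero {p : ℝ} (hp : p ≠ 0) : potential lam f a p 0 = 0 := by
  simp [potential, partialSum, Real.zero_rpow hp]

lemma rpow_mul_potential_succ_le {p : ℝ} (hp : 1 < p) (hlam : ∀ n, 0 < lam n)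
    (hf : ∀ n, 0 < f n) (ha : ∀ n, 0 ≤ a n) (n : ℕ) :
    f (n + 1) ^ (p - 1) * potential lam f a p (n + 1) ≤
      potential lam f a p n + lam (n + 1) * a (n + 1) ^ p := by
  have hl := hlam (n + 1)
  have hla : 0 ≤ lam (n + 1) * a (n + 1) := mul_nonneg hl.le (ha _)
  have hlast : (lam (n + 1) * a (n + 1)) ^ p / lam (n + 1) ^ (p - 1) =
      lam (n + 1) * a (n + 1) ^ p := by
    rw [rpow_div_rpow_sub_one_eq hla hl, mul_div_cancel_left₀ _ hl.ne']
  have hreduce : f (n + 1) ^ (p - 1) * potential lam f a p (n + 1) =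
      (partialSum lam a n + lam (n + 1) * a (n + 1)) ^ p /
        (tailProdSum lam f n + lam (n + 1)) ^ (p - 1) := by
    rw [potential, tailProdSum_succ, partialSum_succ,
      Real.mul_rpow (hf _).le (add_nonneg (tailProdSum_nonneg hlam hf n) hl.le),
      ← mul_div_assoc, mul_div_mul_left _ _ (Real.rpow_pos_of_pos (hf _) _).ne']
  rw [hreduce, ← hlast]
  rcases n.eq_zero_or_pos with rfl | hn
  -- Radon's inequality needs `0 < s`; at `n = 0` both partial sums vanish and equality holds.
  · simp [tailProdSum, partialSum, potential, Real.zero_rpow (by linarith : p ≠ 0)]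
  · exact add_rpow_div_add_rpow_sub_one_le hp.le (partialSum_nonneg hlam ha n) hla
      (tailProdSum_pos hlam hf hn) hl

end

end WeightedHardy

open WeightedHardy in
theorem ineq_5_4_general (p : ℝ) (hp : 1 < p)
    (lam Lam b a A : ℕ → ℝ) (hlam : ∀ n, 0 < lam n)
    (hLam : ∀ n, Lam n = ∑ i ∈ Finset.Icc 1 n, lam i)
    (hb : ∀ n, 0 < b n) (ha : ∀ n, 0 ≤ a n)
    (hA : ∀ n, A n = (∑ k ∈ Finset.Icc 1 n, lam k * a k) / Lam n)
    (N : ℕ) :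
    ∑ n ∈ Finset.Icc 1 N,
        ((∑ k ∈ Finset.Icc 1 n, lam k * ∏ i ∈ Finset.Icc k n, b i ^ (1 / (p - 1))) /
              Lam n) ^ (-(p - 1)) *
          (b n / lam n - 1 / lam (n + 1)) * Lam n * A n ^ p ≤
      ∑ n ∈ Finset.Icc 1 N, a n ^ p := by
  set f : ℕ → ℝ := fun i => b i ^ (1 / (p - 1))
  have hf : ∀ i, 0 < f i := fun i => Real.rpow_pos_of_pos (hb i) _
  have hfb : ∀ i, f i ^ (p - 1) = b i := fun i => by
    simp only [f, one_div]
    exact Real.rpow_inv_rpow (hb i).le (by linarith)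
  set Φ := potential lam f a p
  calc _ = ∑ n ∈ Icc 1 N, (b n * Φ n / lam n - Φ n / lam (n + 1)) := by
        refine sum_congr rfl fun n hn => ?_
        have hn : 1 ≤ n := (mem_Icc.1 hn).1
        rw [hA, hLam]
        refine (div_rpow_neg_mul_mul_div_rpow _ (tailProdSum_pos hlam hf hn)
          (sum_pos (fun i _ => hlam i) (nonempty_Icc.2 hn)) (partialSum_nonneg hlam ha n)).trans ?_
        simp only [Φ, potential]
        ring
    _ ≤ ∑ n ∈ Icc 1 N, a n ^ p := by
      have hstep (n : ℕ) :
          b (n + 1) * Φ (n + 1) / lam (n + 1) ≤ a (n + 1) ^ p + Φ n / lam (n + 1) := by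
        rw [← hfb, div_le_iff₀ (hlam _), add_mul, div_mul_cancel₀ _ (hlam _).ne']
        linarith [rpow_mul_potential_succ_le hp hlam hf ha n]
      have htelescope := sum_Icc_sub_add_le (x := fun n => b n * Φ n / lam n) (y := fun n => a n ^ p)
        (g := fun n => Φ n / lam (n + 1)) hstep N
      have hΦN : 0 ≤ Φ N / lam (N + 1) :=
        div_nonneg (potential_nonneg p hlam hf ha N) (hlam _).le
      simp only [Φ, potential_zero (by linarith : p ≠ 0), zero_div, add_zero] at htelescope
      linarith

/-- Inequality (5.4) of the paper. -/
theorem ineq_5_4 (p : ℝ) (hp : 1 < p)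
    (lam Lam b a A : ℕ → ℝ) (hlam : ∀ n, 0 < lam n)
    (hLam : ∀ n, Lam n = ∑ i ∈ Finset.Icc 1 n, lam i)
    (hb : ∀ n, 0 < b n) (ha : ∀ n, 0 ≤ a n)
    (hA : ∀ n, A n = (∑ k ∈ Finset.Icc 1 n, lam k * a k) / Lam n)
    (N : ℕ) (hN : 1 ≤ N) :
    ∑ n ∈ Finset.Icc 1 N,
        ((∑ k ∈ Finset.Icc 1 n, lam k * ∏ i ∈ Finset.Icc k n, b i ^ (1 / (p - 1))) /
              Lam n) ^ (-(p - 1)) *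
          (b n / lam n - 1 / lam (n + 1)) * Lam n * A n ^ p ≤
      ∑ n ∈ Finset.Icc 1 N, a n ^ p :=
  ineq_5_4_general p hp lam Lam b a A hlam hLam hb ha hA N
end

section
/- Improved Hardy inequality: for p > 1 and any non-negative sequence (a_n), \sum_{n=1}^\infty ((\sum_{k=1}^n \prod_{i=k}^n (1 + (1 - 1/p)/i)^{1/(p-1)})/n)^{-(p-1)} ((1/n) \sum_{k=1}^n a_k)^p \le (p/(p-1)) \sum_{n=1}^\infty a_n^p. -/
/-!
Put θ = 1 - 1/p and R(k, n) = ∏_{i=k}^n (1 + θ/i), so that the weight of the n-th term is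
T_n = ∑_{k ≤ n} R(k, n)^{1/(p-1)}. Hölder's inequality in Radon's form,
(∑_{k ≤ n} a_k)^p ≤ T_n^{p-1} ∑_{k ≤ n} a_k^p / R(k, n), bounds the n-th term by
∑_{k ≤ n} a_k^p / (n R(k, n)). After exchanging the order of summation, a_k^p is multiplied by
∑_{n ≥ k} 1 / (n R(k, n)), which telescopes since 1/R(k, n-1) - 1/R(k, n) = θ / (n R(k, n)),
and is therefore at most 1/θ = p/(p-1).
-/

open Finset Real

theorem Finset.sum_range_succ_eq_sum_Icc_one {M : Type*} [AddCommMonoid M] (f : ℕ → M) (N : ℕ) :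
    ∑ n ∈ range N, f (n + 1) = ∑ m ∈ Icc 1 N, f m := by
  rw [range_eq_Ico, sum_Ico_add', zero_add, Ico_add_one_right_eq_Icc]

theorem rpow_sum_le_sum_rpow_div_mul {ι : Type*} (s : Finset ι) {p : ℝ} (hp : 1 < p)
    {f w : ι → ℝ} (hf : ∀ i ∈ s, 0 ≤ f i) (hw : ∀ i ∈ s, 0 < w i) :
    (∑ i ∈ s, f i) ^ p ≤ (∑ i ∈ s, f i ^ p / w i) * (∑ i ∈ s, w i ^ (1 / (p - 1))) ^ (p - 1) := by
  have hp0 : 0 < p := by linarith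
  have hholder := inner_le_Lp_mul_Lq_of_nonneg s (q := p / (p - 1))
    (HolderConjugate.conjExponent hp) (f := fun i => f i / w i ^ (1 / p))
    (g := fun i => w i ^ (1 / p))
    (fun i hi => by have := hf i hi; have := hw i hi; positivity)
    (fun i hi => by have := hw i hi; positivity)
  have hfw : ∀ i ∈ s, f i / w i ^ (1 / p) * w i ^ (1 / p) = f i := fun i hi =>
    div_mul_cancel₀ _ (rpow_pos_of_pos (hw i hi) _).ne'
  have hfp : ∀ i ∈ s, (f i / w i ^ (1 / p)) ^ p = f i ^ p / w i := fun i hi => by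
    rw [div_rpow (hf i hi) (rpow_nonneg (hw i hi).le _), ← rpow_mul (hw i hi).le,
      one_div_mul_cancel hp0.ne', rpow_one]
  have hwq : ∀ i ∈ s, (w i ^ (1 / p)) ^ (p / (p - 1)) = w i ^ (1 / (p - 1)) := fun i hi => by
    rw [← rpow_mul (hw i hi).le]
    congr 1
    field_simp
  rw [sum_congr rfl hfw, sum_congr rfl hfp, sum_congr rfl hwq] at hholder
  have hX : 0 ≤ ∑ i ∈ s, f i ^ p / w i :=
    sum_nonneg fun i hi => by have := hf i hi; have := hw i hi; positivity
  have hY : 0 ≤ ∑ i ∈ s, w i ^ (1 / (p - 1)) :=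
    sum_nonneg fun i hi => by have := hw i hi; positivity
  calc (∑ i ∈ s, f i) ^ p
      ≤ ((∑ i ∈ s, f i ^ p / w i) ^ (1 / p) *
          (∑ i ∈ s, w i ^ (1 / (p - 1))) ^ (1 / (p / (p - 1)))) ^ p :=
        rpow_le_rpow (sum_nonneg hf) hholder hp0.le
    _ = _ := by
        rw [mul_rpow (by positivity) (by positivity), ← rpow_mul hX, ← rpow_mul hY,
          one_div_mul_cancel hp0.ne', rpow_one]
        congr 2
        field_simp

theorem div_rpow_neg_mul_div_rpow_le {ι : Type*} {s : Finset ι} (hs : s.Nonempty) {p : ℝ}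
    (hp : 1 < p) {f w : ι → ℝ} (hf : ∀ i ∈ s, 0 ≤ f i) (hw : ∀ i ∈ s, 0 < w i) {c : ℝ}
    (hc : 0 < c) :
    ((∑ i ∈ s, w i ^ (1 / (p - 1))) / c) ^ (-(p - 1)) * ((∑ i ∈ s, f i) / c) ^ p ≤
      ∑ i ∈ s, f i ^ p / (c * w i) := by
  set T := ∑ i ∈ s, w i ^ (1 / (p - 1))
  have hT : 0 < T := sum_pos (fun i hi => rpow_pos_of_pos (hw i hi) _) hs
  have hTp : 0 < T ^ (p - 1) := rpow_pos_of_pos hT _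
  have hA : 0 ≤ ∑ i ∈ s, f i := sum_nonneg hf
  have hcp : c ^ p = c ^ (p - 1) * c := by
    rw [← rpow_add_one hc.ne', sub_add_cancel]
  calc (T / c) ^ (-(p - 1)) * ((∑ i ∈ s, f i) / c) ^ p
      = (∑ i ∈ s, f i) ^ p / T ^ (p - 1) / c := by
        rw [rpow_neg (div_pos hT hc).le, div_rpow hT.le hc.le, div_rpow hA hc.le, hcp]
        field_simp
    _ ≤ (∑ i ∈ s, f i ^ p / w i) / c := by
        gcongr
        rw [div_le_iff₀ hTp]
        exact rpow_sum_le_sum_rpow_div_mul s hp hf hw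
    _ = ∑ i ∈ s, f i ^ p / (c * w i) := by
        rw [sum_div]
        exact sum_congr rfl fun i _ => by rw [div_div, mul_comm]

noncomputable def hardyWeight (θ : ℝ) (k m : ℕ) : ℝ :=
  ∏ i ∈ Icc k m, (1 + θ / i)

theorem hardyWeight_pos {θ : ℝ} (hθ : 0 ≤ θ) (k m : ℕ) : 0 < hardyWeight θ k m :=
  prod_pos fun i _ => by positivity

theorem hardyWeight_rpow {θ : ℝ} (hθ : 0 ≤ θ) (k m : ℕ) (r : ℝ) :
    hardyWeight θ k m ^ r = ∏ i ∈ Icc k m, (1 + θ / i) ^ r :=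
  (finsetProd_rpow _ _ (fun i _ => by positivity) r).symm

theorem hardyWeight_succ {θ : ℝ} {k m : ℕ} (h : k ≤ m + 1) :
    hardyWeight θ k (m + 1) = hardyWeight θ k m * (1 + θ / (m + 1)) := by
  rw [hardyWeight, hardyWeight, prod_Icc_succ_top h, Nat.cast_succ]

theorem mul_sum_one_div_mul_hardyWeight {θ : ℝ} (hθ : 0 ≤ θ) (k N : ℕ) :
    θ * ∑ m ∈ Icc k N, 1 / (m * hardyWeight θ k m) = 1 - 1 / hardyWeight θ k N := by
  induction N with
  | zero => cases k <;> simp [hardyWeight]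
  | succ N ih =>
    by_cases h : k ≤ N + 1
    · have hW := hardyWeight_pos hθ k N
      rw [sum_Icc_succ_top h, mul_add, ih, hardyWeight_succ h]
      push_cast
      field_simp
      ring
    · rw [Icc_eq_empty (by omega), hardyWeight, Icc_eq_empty (by omega)]
      simp

theorem sum_one_div_mul_hardyWeight_le {θ : ℝ} (hθ : 0 < θ) (k N : ℕ) :
    ∑ m ∈ Icc k N, 1 / (m * hardyWeight θ k m) ≤ θ⁻¹ := by
  rw [← mul_one θ⁻¹, le_inv_mul_iff₀ hθ, mul_sum_one_div_mul_hardyWeight hθ.le]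
  have := hardyWeight_pos hθ.le k N
  linarith [one_div_pos.mpr this]

theorem sum_Icc_sum_Icc_div_mul_hardyWeight_le {θ : ℝ} (hθ : 0 < θ) {g : ℕ → ℝ}
    (hg : ∀ k, 0 ≤ g k) (N : ℕ) :
    ∑ m ∈ Icc 1 N, ∑ k ∈ Icc 1 m, g k / (m * hardyWeight θ k m) ≤
      θ⁻¹ * ∑ k ∈ Icc 1 N, g k := by
  calc ∑ m ∈ Icc 1 N, ∑ k ∈ Icc 1 m, g k / (m * hardyWeight θ k m)
      = ∑ k ∈ Icc 1 N, g k * ∑ m ∈ Icc k N, 1 / (m * hardyWeight θ k m) := by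
        simp_rw [mul_sum, mul_one_div]
        exact sum_comm' fun m k => by simp only [mem_Icc]; omega
    _ ≤ ∑ k ∈ Icc 1 N, g k * θ⁻¹ :=
        sum_le_sum fun k _ =>
          mul_le_mul_of_nonneg_left (sum_one_div_mul_hardyWeight_le hθ k N) (hg k)
    _ = θ⁻¹ * ∑ k ∈ Icc 1 N, g k := by rw [← sum_mul, mul_comm]

/-- An improvement of Hardy's inequality. -/
theorem improved_hardy (p : ℝ) (hp : 1 < p)
    (a : ℕ → ℝ) (ha : ∀ n, 0 ≤ a n)
    (hsum : Summable fun n : ℕ => a (n + 1) ^ p) :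
    ∑' n : ℕ,
        ((∑ k ∈ Finset.Icc 1 (n + 1),
              ∏ i ∈ Finset.Icc k (n + 1), (1 + (1 - 1 / p) / (i : ℝ)) ^ (1 / (p - 1))) /
            ((n : ℝ) + 1)) ^ (-(p - 1)) *
          ((∑ k ∈ Finset.Icc 1 (n + 1), a k) / ((n : ℝ) + 1)) ^ p ≤
      (p / (p - 1)) * ∑' n : ℕ, a (n + 1) ^ p := by
  have hθinv : (1 - 1 / p)⁻¹ = p / (p - 1) := by
    have : p - 1 ≠ 0 := by linarith
    field_simp
  set θ := 1 - 1 / p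
  have hθ : 0 < θ := by
    have : 1 / p < 1 := (div_lt_one (by linarith)).mpr hp
    linarith
  simp_rw [← hardyWeight_rpow hθ.le]
  refine tsum_le_of_sum_range_le (fun n => ?_) fun N => ?_
  · exact mul_nonneg
      (rpow_nonneg (div_nonneg
        (sum_nonneg fun k _ => rpow_nonneg (hardyWeight_pos hθ.le k _).le _)
        n.cast_add_one_pos.le) _)
      (rpow_nonneg (div_nonneg (sum_nonneg fun k _ => ha k) n.cast_add_one_pos.le) _)
  calc _ ≤ ∑ n ∈ range N, ∑ k ∈ Icc 1 (n + 1),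
          a k ^ p / (((n + 1 : ℕ) : ℝ) * hardyWeight θ k (n + 1)) :=
        sum_le_sum fun n _ => by
          exact_mod_cast div_rpow_neg_mul_div_rpow_le ⟨1, by simp⟩ hp (fun k _ => ha k)
            (fun k _ => hardyWeight_pos hθ.le k (n + 1)) (Nat.cast_add_one_pos n)
    _ = ∑ m ∈ Icc 1 N, ∑ k ∈ Icc 1 m, a k ^ p / (m * hardyWeight θ k m) :=
        sum_range_succ_eq_sum_Icc_one
          (fun m => ∑ k ∈ Icc 1 m, a k ^ p / (m * hardyWeight θ k m)) N
    _ ≤ θ⁻¹ * ∑ k ∈ Icc 1 N, a k ^ p :=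
        sum_Icc_sum_Icc_div_mul_hardyWeight_le hθ (fun k => rpow_nonneg (ha k) p) N
    _ ≤ p / (p - 1) * ∑' n : ℕ, a (n + 1) ^ p := by
        rw [hθinv, ← sum_range_succ_eq_sum_Icc_one (fun k => a k ^ p)]
        gcongr
        exact hsum.sum_le_tsum _ fun n _ => rpow_nonneg (ha _) p
end

section
/- For p > 1 and every n \ge 1, (\sum_{k=1}^n \prod_{i=k}^n (1 + (1 - 1/p)/i)^{1/(p-1)})/n \le p/(p-1), so the improved Hardy inequality is indeed at least as strong as Hardy's inequality. -/
/-!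
Write `w i = (1 + (1 - 1/p)/i)^(1/(p-1))` and `S n = ∑_{k ≤ n} ∏_{k ≤ i ≤ n} w i`, so that
`S (n+1) = w (n+1) * (S n + 1)`. With `c = p/(p-1)`, the bound `S n ≤ c n` propagates along this
recursion as soon as `w (N+1) * (c N + 1) ≤ c (N+1)`, i.e. `w N ≤ N p / (N p - 1)`. For the latter,
with `t = 1/(N p)` and `r = 1/(p-1)` one has `w N = (1 + t/r)^r ≤ exp t ≤ 1/(1-t)`.
-/

open Finset

lemma Real.one_add_div_rpow_le_exp {x r : ℝ} (hr : 0 < r) (hx : -r ≤ x) :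
    (1 + x / r) ^ r ≤ Real.exp x := by
  have hbase : 0 ≤ 1 + x / r := by
    have : -1 ≤ x / r := by rwa [le_div_iff₀ hr, neg_one_mul]
    linarith
  calc (1 + x / r) ^ r ≤ Real.exp (x / r) ^ r := by
        gcongr
        linarith [Real.add_one_le_exp (x / r)]
    _ = Real.exp x := by rw [← Real.exp_mul, div_mul_cancel₀ x hr.ne']

lemma improved_hardy_weight_le {p x : ℝ} (hp : 1 < p) (hxp : 1 < x * p) :
    (1 + (1 - 1 / p) / x) ^ (1 / (p - 1)) ≤ x * p / (x * p - 1) := by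
  have hp0 : 0 < p := by linarith
  have hp1 : 0 < p - 1 := by linarith
  have hx : 0 < x := pos_of_mul_pos_left (by linarith) hp0.le
  have ht : 1 / (x * p) < 1 := (div_lt_one (by linarith)).2 hxp
  have hbase : (1 - 1 / p) / x = 1 / (x * p) / (1 / (p - 1)) := by
    field_simp
  calc (1 + (1 - 1 / p) / x) ^ (1 / (p - 1))
      = (1 + 1 / (x * p) / (1 / (p - 1))) ^ (1 / (p - 1)) := by rw [hbase]
    _ ≤ Real.exp (1 / (x * p)) :=
        Real.one_add_div_rpow_le_exp (by positivity) (by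
          have : 0 ≤ 1 / (x * p) := by positivity
          linarith [show 0 < 1 / (p - 1) by positivity])
    _ ≤ 1 / (1 - 1 / (x * p)) := Real.exp_bound_div_one_sub_of_interval (by positivity) ht
    _ = x * p / (x * p - 1) := by
        field_simp

lemma Finset.sum_prod_Icc_succ_top {R : Type*} [CommSemiring R] (f : ℕ → R) (n : ℕ) :
    ∑ k ∈ Icc 1 (n + 1), ∏ i ∈ Icc k (n + 1), f i =
      f (n + 1) * (∑ k ∈ Icc 1 n, ∏ i ∈ Icc k n, f i + 1) := by
  rw [sum_congr rfl fun k hk => prod_Icc_succ_top (mem_Icc.1 hk).2 f, ← sum_mul,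
    sum_Icc_succ_top (by omega), Icc_eq_empty (show ¬n + 1 ≤ n by omega), prod_empty]
  ring

lemma Finset.sum_prod_Icc_le_mul {f : ℕ → ℝ} {c : ℝ} (hf : ∀ i, 0 ≤ f i)
    (hstep : ∀ N : ℕ, f (N + 1) * (c * N + 1) ≤ c * (N + 1)) (n : ℕ) :
    ∑ k ∈ Icc 1 n, ∏ i ∈ Icc k n, f i ≤ c * n := by
  induction n with
  | zero => simp
  | succ n ih =>
    rw [sum_prod_Icc_succ_top, Nat.cast_succ]
    calc f (n + 1) * (∑ k ∈ Icc 1 n, ∏ i ∈ Icc k n, f i + 1)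
        ≤ f (n + 1) * (c * n + 1) := by gcongr; exact hf _
      _ ≤ c * (n + 1) := hstep n

theorem improved_hardy_weights_le_general (p : ℝ) (hp : 1 < p) (n : ℕ) :
    (∑ k ∈ Finset.Icc 1 n,
        ∏ i ∈ Finset.Icc k n, (1 + (1 - 1 / p) / (i : ℝ)) ^ (1 / (p - 1))) / (n : ℝ) ≤
      p / (p - 1) := by
  have hp1 : 0 < p - 1 := by linarith
  have hq : 0 ≤ 1 - 1 / p := by
    rw [sub_nonneg, div_le_one (by linarith)]
    exact hp.le
  refine div_le_of_le_mul₀ n.cast_nonneg (by positivity) (sum_prod_Icc_le_mul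
    (fun i => Real.rpow_nonneg (by positivity) _) (fun N => ?_) n)
  have hNp : 1 < ((N + 1 : ℕ) : ℝ) * p := by
    push_cast
    nlinarith [(N.cast_nonneg : (0 : ℝ) ≤ N)]
  calc (1 + (1 - 1 / p) / ((N + 1 : ℕ) : ℝ)) ^ (1 / (p - 1)) * (p / (p - 1) * N + 1)
      ≤ ((N + 1 : ℕ) : ℝ) * p / (((N + 1 : ℕ) : ℝ) * p - 1) * (p / (p - 1) * N + 1) := by
        gcongr
        exact improved_hardy_weight_le hp hNp
    _ = p / (p - 1) * (N + 1) := by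
        push_cast at hNp ⊢
        field_simp [(by linarith : ((N : ℝ) + 1) * p - 1 ≠ 0)]
        ring

/-- The weight factors in the improved Hardy inequality are at most `p/(p-1)`. -/
theorem improved_hardy_weights_le (p : ℝ) (hp : 1 < p) (n : ℕ) (hn : 1 ≤ n) :
    (∑ k ∈ Finset.Icc 1 n,
        ∏ i ∈ Finset.Icc k n, (1 + (1 - 1 / p) / (i : ℝ)) ^ (1 / (p - 1))) / (n : ℝ) ≤
      p / (p - 1) :=
  improved_hardy_weights_le_general p hp n
end
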